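/- arXiv:1411.4987 — 3 statements merged into one kernel-verified Lean document; each statement's English description precedes it below -/
import Mathlib

section
/- Every Archimedean ℓu-group (G, u) admits an injective group homomorphism ε into a unital Archimedean ℓu-ring R such that ε preserves ∨ and ∧ and ε(u) = 1. -/
universe u

/-- An Archimedean-free bundled ℓu-group: an abelian ℓ-group with monotone addition
and a distinguished strong unit `u`. -/
structure LuGroup : Type (u + 1) where
  G : Type u
  [grp : AddCommGroup G]
  [lat : Lattice G]
  add_le_add : ∀ a b c : G, a ≤ b → c + a ≤ c + b
  u : G
  u_nonneg : 0 ≤ u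
  u_strong : ∀ x : G, ∃ n : ℕ, x ≤ n • u

attribute [instance] LuGroup.grp LuGroup.lat

/-- Archimedean ℓ-group. -/
def LuGroup.Arch (L : LuGroup.{u}) : Prop :=
  ∀ x y : L.G, (∀ n : ℕ, n • x ≤ y) → x ≤ 0

/-- A unital ℓu-ring: a commutative ring with lattice order, monotone addition,
`1` a strong unit, product of positives positive, and the f-ring condition. -/
structure LuRing : Type (u + 1) where
  R : Type u
  [ring : CommRing R]
  [lat : Lattice R]
  add_le_add : ∀ a b c : R, a ≤ b → c + a ≤ c + b
  one_nonneg : (0 : R) ≤ 1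
  one_strong : ∀ x : R, ∃ n : ℕ, x ≤ n • (1 : R)
  mul_nonneg : ∀ a b : R, 0 ≤ a → 0 ≤ b → 0 ≤ a * b
  f_ring : ∀ x y z : R, x ⊓ y = 0 → 0 ≤ z → (z * x) ⊓ y = 0

attribute [instance] LuRing.ring LuRing.lat

/-- Archimedean ℓu-ring. -/
def LuRing.Arch (S : LuRing.{u}) : Prop :=
  ∀ x y : S.R, (∀ n : ℕ, n • x ≤ y) → x ≤ 0

/-- A morphism of unital ℓu-rings: a ring homomorphism preserving `⊔` and `⊓`. -/
def LuRingHom (S T : LuRing.{u}) (f : S.R → T.R) : Prop :=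
  (∀ x y, f (x + y) = f x + f y) ∧ (∀ x y, f (x * y) = f x * f y) ∧ f 1 = 1 ∧
  (∀ x y, f (x ⊔ y) = f x ⊔ f y) ∧ (∀ x y, f (x ⊓ y) = f x ⊓ f y)

/-- An ℓu-group morphism from `(G, u)` to an ℓu-ring `(R, 1)`: a group homomorphism
preserving `⊔` and `⊓` and sending `u` to `1`. -/
def LuGroupRingHom (L : LuGroup.{u}) (S : LuRing.{u}) (f : L.G → S.R) : Prop :=
  (∀ x y, f (x + y) = f x + f y) ∧ (∀ x y, f (x ⊔ y) = f x ⊔ f y) ∧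
  (∀ x y, f (x ⊓ y) = f x ⊓ f y) ∧ f L.u = 1

/-!
For `0 < a` in an Archimedean ℓu-group `(G, u)` pick `n` with `n • a ≰ u`, and by Zorn a solid
subgroup `M` maximal among those avoiding `b = (n • a - u)⁺`. Such an `M` is prime, so `G ⧸ M` is
totally ordered, and `u ∉ M`. Measuring `x` against `u` in `G ⧸ M`, `φ x = lim ⌊n • x / u⌋ / n`
(Fekete) is a lattice homomorphism `G → ℝ` with `φ u = 1` and `n * φ a ≥ 1`. So these unital real
lattice homomorphisms separate the points of `G`, and evaluation embeds `G` into the bounded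
continuous functions on the space they form, an Archimedean f-ring with strong unit `1`.
-/

open LatticeOrderedAddCommGroup
open scoped BoundedContinuousFunction

section LatticeOrderedGroup

variable {α : Type*} [AddCommGroup α] [Lattice α]

structure IsUnitalLatticeHom (u : α) (φ : α → ℝ) : Prop where
  map_add : ∀ x y, φ (x + y) = φ x + φ y
  map_sup : ∀ x y, φ (x ⊔ y) = φ x ⊔ φ y
  map_inf : ∀ x y, φ (x ⊓ y) = φ x ⊓ φ y
  map_unit : φ u = 1

namespace IsUnitalLatticeHom

variable {u : α} {φ : α → ℝ}

def toAddMonoidHom (hφ : IsUnitalLatticeHom u φ) : α →+ ℝ := AddMonoidHom.mk' φ hφ.map_add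

theorem map_neg (hφ : IsUnitalLatticeHom u φ) (x : α) : φ (-x) = -φ x :=
  _root_.map_neg hφ.toAddMonoidHom x

theorem map_nsmul (hφ : IsUnitalLatticeHom u φ) (n : ℕ) (x : α) : φ (n • x) = n * φ x :=
  (_root_.map_nsmul hφ.toAddMonoidHom n x).trans (nsmul_eq_mul n (φ x))

theorem monotone (hφ : IsUnitalLatticeHom u φ) : Monotone φ := fun x y hxy => by
  rw [← sup_eq_right.mpr hxy, hφ.map_sup]; exact le_sup_left

theorem map_abs (hφ : IsUnitalLatticeHom u φ) (x : α) : φ |x| = |φ x| := by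
  change φ (x ⊔ -x) = φ x ⊔ -φ x
  rw [hφ.map_sup, hφ.map_neg]

theorem abs_le_of_abs_le_nsmul (hφ : IsUnitalLatticeHom u φ) {x : α} {n : ℕ}
    (hx : |x| ≤ n • u) : |φ x| ≤ n := by
  simpa [hφ.map_abs, hφ.map_nsmul, hφ.map_unit] using hφ.monotone hx

end IsUnitalLatticeHom

/-- The unital lattice homomorphisms `α → ℝ`, with the topology of pointwise convergence. -/
abbrev UnitalLatticeHoms (u : α) : Type _ := {φ : α → ℝ // IsUnitalLatticeHom u φ}

noncomputable def evalBounded {u : α} (hu : ∀ x : α, ∃ n : ℕ, x ≤ n • u) (x : α) :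
    UnitalLatticeHoms u →ᵇ ℝ :=
  .ofNormedAddCommGroup (fun φ => φ.1 x) ((continuous_apply x).comp continuous_subtype_val)
    (hu |x|).choose fun φ => φ.2.abs_le_of_abs_le_nsmul (hu |x|).choose_spec

section evalBounded

variable {u : α} (hu : ∀ x : α, ∃ n : ℕ, x ≤ n • u)

theorem evalBounded_add (x y : α) : evalBounded hu (x + y) = evalBounded hu x + evalBounded hu y :=
  BoundedContinuousFunction.ext fun φ => φ.2.map_add x y

theorem evalBounded_sup (x y : α) : evalBounded hu (x ⊔ y) = evalBounded hu x ⊔ evalBounded hu y :=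
  BoundedContinuousFunction.ext fun φ => φ.2.map_sup x y

theorem evalBounded_inf (x y : α) : evalBounded hu (x ⊓ y) = evalBounded hu x ⊓ evalBounded hu y :=
  BoundedContinuousFunction.ext fun φ => φ.2.map_inf x y

theorem evalBounded_unit : evalBounded hu u = 1 :=
  BoundedContinuousFunction.ext fun φ => φ.2.map_unit

end evalBounded

/-- `x ≤ y` in the quotient `α ⧸ M`. -/
def LeMod (M : AddSubgroup α) (x y : α) : Prop := (x - y)⁺ ∈ M

namespace LeMod

variable {M : AddSubgroup α} {x y z x' y' : α}

theorem neg (h : LeMod M x y) : LeMod M (-y) (-x) := by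
  rwa [LeMod, neg_sub_neg]

theorem total (hM : ∀ z : α, z⁺ ∈ M ∨ z⁻ ∈ M) (x y : α) : LeMod M x y ∨ LeMod M y x := by
  refine (hM (x - y)).imp id fun h => ?_
  rwa [LeMod, ← neg_sub, posPart_neg]

end LeMod

variable [IsOrderedAddMonoid α]

theorem eq_zero_of_abs_nonpos {x : α} (h : |x| ≤ 0) : x = 0 :=
  le_antisymm ((le_abs_self x).trans h) (neg_nonpos.mp ((neg_le_abs x).trans h))

theorem posPart_add_le (a b : α) : (a + b)⁺ ≤ a⁺ + b⁺ :=
  sup_le (add_le_add (le_posPart a) (le_posPart b))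
    (add_nonneg (posPart_nonneg a) (posPart_nonneg b))

theorem posPart_nsmul_le (n : ℕ) (a : α) : (n • a)⁺ ≤ n • a⁺ :=
  sup_le (nsmul_le_nsmul_right (le_posPart a) n) (nsmul_nonneg (posPart_nonneg a) n)

theorem nsmul_inf_eq_zero {a b : α} (ha : 0 ≤ a) (hb : 0 ≤ b) (hab : a ⊓ b = 0) (n : ℕ) :
    (n • a) ⊓ b = 0 := by
  induction n with
  | zero => simpa using inf_eq_left.mpr hb
  | succ n ih =>
    refine le_antisymm ?_ (le_inf (nsmul_nonneg ha (n + 1)) hb)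
    -- `(n + 1) • a ⊓ b ≤ (n • a + a) ⊓ (n • a + b) ⊓ b = (n • a + a ⊓ b) ⊓ b`
    have h : ((n + 1) • a) ⊓ b ≤ ((n • a + a) ⊓ (n • a + b)) ⊓ b := by
      refine le_inf (le_inf ?_ ?_) inf_le_right
      · rw [succ_nsmul]; exact inf_le_left
      · exact inf_le_right.trans (le_add_of_nonneg_left (nsmul_nonneg ha n))
    rw [← add_inf, hab, add_zero] at h
    exact h.trans ih.le

theorem nsmul_inf_nsmul_eq_zero {a b : α} (ha : 0 ≤ a) (hb : 0 ≤ b) (hab : a ⊓ b = 0)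
    (m n : ℕ) : (m • a) ⊓ (n • b) = 0 := by
  have hmb : b ⊓ (m • a) = 0 := by rw [inf_comm]; exact nsmul_inf_eq_zero ha hb hab m
  rw [inf_comm]
  exact nsmul_inf_eq_zero hb (nsmul_nonneg ha m) hmb n

theorem nsmul_le_mul_nsmul {x u : α} {N : ℕ} (h : x ≤ N • u) (n : ℕ) : n • x ≤ (n * N) • u := by
  rw [mul_nsmul']; exact nsmul_le_nsmul_right h n

namespace LatticeOrderedAddCommGroup

theorem IsSolid.mem_of_nonneg_of_le {s : Set α} (hs : IsSolid s) {x y : α} (hy : y ∈ s)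
    (hx : 0 ≤ x) (hxy : x ≤ y) : x ∈ s :=
  hs hy (by rwa [abs_of_nonneg hx, abs_of_nonneg (hx.trans hxy)])

theorem IsSolid.abs_mem {s : Set α} (hs : IsSolid s) {x : α} (hx : x ∈ s) : |x| ∈ s :=
  hs hx (abs_abs x).le

end LatticeOrderedAddCommGroup

def solidAdjoin (M : AddSubgroup α) (g : α) : AddSubgroup α where
  carrier := {x | ∃ h ∈ M, 0 ≤ h ∧ ∃ k : ℕ, |x| ≤ h + k • g}
  zero_mem' := ⟨0, M.zero_mem, le_rfl, 0, by simp⟩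
  add_mem' := by
    rintro x y ⟨h, hh, h0, k, hk⟩ ⟨h', hh', h0', k', hk'⟩
    refine ⟨h + h', M.add_mem hh hh', add_nonneg h0 h0', k + k', ?_⟩
    calc |x + y| ≤ |x| + |y| := abs_add_le x y
      _ ≤ (h + k • g) + (h' + k' • g) := add_le_add hk hk'
      _ = h + h' + (k + k') • g := by rw [add_nsmul]; abel
  neg_mem' := by
    rintro x ⟨h, hh, h0, k, hk⟩
    exact ⟨h, hh, h0, k, by rwa [abs_neg]⟩

theorem isSolid_solidAdjoin (M : AddSubgroup α) (g : α) : IsSolid (solidAdjoin M g : Set α) :=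
  fun _ ⟨h, hh, h0, k, hk⟩ _ hyx => ⟨h, hh, h0, k, hyx.trans hk⟩

theorem le_solidAdjoin {M : AddSubgroup α} (hM : IsSolid (M : Set α)) (g : α) :
    M ≤ solidAdjoin M g :=
  fun x hx => ⟨|x|, hM.abs_mem hx, abs_nonneg x, 0, by simp⟩

theorem mem_solidAdjoin_self (M : AddSubgroup α) {g : α} (hg : 0 ≤ g) : g ∈ solidAdjoin M g :=
  ⟨0, M.zero_mem, le_rfl, 1, by simp [abs_of_nonneg hg]⟩

theorem exists_maximal_isSolid_notMem {b : α} (hb : b ≠ 0) :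
    ∃ M : AddSubgroup α, Maximal (fun N : AddSubgroup α => IsSolid (N : Set α) ∧ b ∉ N) M := by
  obtain ⟨M, -, hM⟩ := zorn_le_nonempty₀ {N : AddSubgroup α | IsSolid (N : Set α) ∧ b ∉ N}
    (fun c hc hchain N hN => by
      have hmem : ∀ {x}, x ∈ sSup c ↔ ∃ s ∈ c, x ∈ s :=
        AddSubgroup.mem_sSup_of_directedOn ⟨N, hN⟩ hchain.directedOn
      refine ⟨sSup c, ⟨fun x hx y hyx => ?_, fun hbc => ?_⟩, fun s hs => le_sSup hs⟩
      · obtain ⟨s, hs, hxs⟩ := hmem.mp hx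
        exact hmem.mpr ⟨s, hs, (hc hs).1 hxs hyx⟩
      · obtain ⟨s, hs, hbs⟩ := hmem.mp hbc
        exact (hc hs).2 hbs)
    ⊥ ⟨fun x hx y hyx => by
        rw [SetLike.mem_coe, AddSubgroup.mem_bot] at hx ⊢
        exact eq_zero_of_abs_nonpos (by simpa [hx] using hyx),
      by simpa using hb⟩
  exact ⟨M, hM⟩

-- If neither lies in `M`, maximality puts `b` in `solidAdjoin M z⁺` and in `solidAdjoin M z⁻`,
-- whose intersection is `M` because multiples of `z⁺` and `z⁻` are disjoint.
theorem posPart_mem_or_negPart_mem {b : α} {M : AddSubgroup α}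
    (hM : Maximal (fun N : AddSubgroup α => IsSolid (N : Set α) ∧ b ∉ N) M) (z : α) :
    z⁺ ∈ M ∨ z⁻ ∈ M := by
  have b_mem_adjoin : ∀ {g : α}, 0 ≤ g → g ∉ M → ∃ h ∈ M, 0 ≤ h ∧ ∃ k : ℕ, |b| ≤ h + k • g := by
    intro g hg hgM
    by_contra hb
    exact hgM (hM.eq_of_le ⟨isSolid_solidAdjoin M g, hb⟩ (le_solidAdjoin hM.prop.1 g) ▸
      mem_solidAdjoin_self M hg)
  by_contra! ⟨hpos, hneg⟩
  obtain ⟨h₁, hh₁, h₁0, k₁, hk₁⟩ := b_mem_adjoin (posPart_nonneg z) hpos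
  obtain ⟨h₂, hh₂, h₂0, k₂, hk₂⟩ := b_mem_adjoin (negPart_nonneg z) hneg
  have hdisj := nsmul_inf_nsmul_eq_zero (posPart_nonneg z) (negPart_nonneg z)
    (posPart_inf_negPart_eq_zero z) k₁ k₂
  have hb : |b| ≤ h₁ + h₂ := by
    have : |b| ≤ (h₁ + h₂ + k₁ • z⁺) ⊓ (h₁ + h₂ + k₂ • z⁻) :=
      le_inf (hk₁.trans (by gcongr; exact le_add_of_nonneg_right h₂0))
        (hk₂.trans (by gcongr; exact le_add_of_nonneg_left h₁0))
    rwa [← add_inf, hdisj, add_zero] at this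
  exact hM.prop.2 (hM.prop.1 (M.add_mem hh₁ hh₂) (hb.trans (le_abs_self _)))

namespace LeMod

variable {M : AddSubgroup α} {x y z x' y' : α}

theorem of_le (h : x ≤ y) : LeMod M x y := by
  rw [LeMod, posPart_eq_zero.mpr (sub_nonpos.mpr h)]; exact M.zero_mem

theorem trans (hM : IsSolid (M : Set α)) (h₁ : LeMod M x y) (h₂ : LeMod M y z) : LeMod M x z :=
  hM.mem_of_nonneg_of_le (M.add_mem h₁ h₂) (posPart_nonneg _)
    (by simpa only [sub_add_sub_cancel] using posPart_add_le (x - y) (y - z))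

theorem add (hM : IsSolid (M : Set α)) (h : LeMod M x y) (h' : LeMod M x' y') :
    LeMod M (x + x') (y + y') :=
  hM.mem_of_nonneg_of_le (M.add_mem h h') (posPart_nonneg _)
    (by simpa only [add_sub_add_comm] using posPart_add_le (x - y) (x' - y'))

theorem nsmul (hM : IsSolid (M : Set α)) (h : LeMod M x y) (n : ℕ) : LeMod M (n • x) (n • y) :=
  hM.mem_of_nonneg_of_le (M.nsmul_mem h n) (posPart_nonneg _)
    (by simpa only [nsmul_sub] using posPart_nsmul_le n (x - y))

theorem sup_left (h : LeMod M x y) : LeMod M (x ⊔ y) y := by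
  rwa [LeMod, sup_sub, sub_self, ← posPart_def, posPart_eq_self.mpr (posPart_nonneg _)]

theorem inf_right (h : LeMod M x y) : LeMod M x (x ⊓ y) := by
  rwa [LeMod, sub_inf, sub_self, sup_comm, ← posPart_def, posPart_eq_self.mpr (posPart_nonneg _)]

theorem zsmul_le {u : α} (hM : IsSolid (M : Set α)) (hu0 : 0 ≤ u) (hu : u ∉ M) {m m' : ℤ}
    (h : LeMod M (m • u) (m' • u)) : m ≤ m' := by
  by_contra! hlt
  have hu_le : u ≤ (m - m') • u := by
    simpa using zsmul_le_zsmul_left hu0 (show 1 ≤ m - m' by omega)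
  rw [LeMod, ← sub_smul, posPart_eq_self.mpr (hu0.trans hu_le)] at h
  exact hu (hM.mem_of_nonneg_of_le h hu0 hu_le)

end LeMod

structure PrimeIdealAvoidingUnit (u : α) (M : AddSubgroup α) : Prop where
  isSolid : IsSolid (M : Set α)
  posPart_mem_or_negPart_mem : ∀ z : α, z⁺ ∈ M ∨ z⁻ ∈ M
  unit_notMem : u ∉ M
  unit_nonneg : 0 ≤ u
  le_nsmul_unit : ∀ x : α, ∃ n : ℕ, x ≤ n • u

namespace PrimeIdealAvoidingUnit

open Filter Topology

variable {u : α} {M : AddSubgroup α}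

theorem exists_isGreatest (S : PrimeIdealAvoidingUnit u M) (x : α) (n : ℕ) :
    ∃ m : ℤ, IsGreatest {m : ℤ | LeMod M (m • u) (n • x)} m := by
  obtain ⟨N, hN⟩ := S.le_nsmul_unit x
  obtain ⟨N', hN'⟩ := S.le_nsmul_unit (-x)
  refine Int.exists_greatest_of_bdd ⟨n * N, fun m hm => ?_⟩ ⟨-(n * N' : ℕ), .of_le ?_⟩
  · refine LeMod.zsmul_le S.isSolid S.unit_nonneg S.unit_notMem (hm.trans S.isSolid (.of_le ?_))
    exact_mod_cast nsmul_le_mul_nsmul hN n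
  · rw [neg_zsmul, natCast_zsmul, neg_le, ← smul_neg]
    exact nsmul_le_mul_nsmul hN' n

variable (S : PrimeIdealAvoidingUnit u M)

/-- `⌊n x / u⌋` computed in the totally ordered quotient by `M`. -/
noncomputable def floor (x : α) (n : ℕ) : ℤ := (S.exists_isGreatest x n).choose

theorem leMod_floor (x : α) (n : ℕ) : LeMod M (S.floor x n • u) (n • x) :=
  (S.exists_isGreatest x n).choose_spec.1

theorem le_floor {x : α} {n : ℕ} {m : ℤ} (h : LeMod M (m • u) (n • x)) : m ≤ S.floor x n :=
  (S.exists_isGreatest x n).choose_spec.2 h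

theorem leMod_floor_add_one (x : α) (n : ℕ) : LeMod M (n • x) ((S.floor x n + 1) • u) :=
  (LeMod.total S.posPart_mem_or_negPart_mem _ _).resolve_right fun h => by
    linarith [S.le_floor h]

theorem floor_mono {x y : α} (h : LeMod M x y) (n : ℕ) : S.floor x n ≤ S.floor y n :=
  S.le_floor ((S.leMod_floor x n).trans S.isSolid (h.nsmul S.isSolid n))

theorem floor_add_floor_le_floor_add (x : α) (m n : ℕ) :
    S.floor x m + S.floor x n ≤ S.floor x (m + n) :=
  S.le_floor (by
    rw [add_zsmul, add_nsmul]; exact (S.leMod_floor x m).add S.isSolid (S.leMod_floor x n))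

theorem floor_add_floor_le (x y : α) (n : ℕ) : S.floor x n + S.floor y n ≤ S.floor (x + y) n :=
  S.le_floor (by
    rw [add_zsmul, nsmul_add]; exact (S.leMod_floor x n).add S.isSolid (S.leMod_floor y n))

theorem floor_add_le (x y : α) (n : ℕ) : S.floor (x + y) n ≤ S.floor x n + S.floor y n + 1 := by
  have h := (S.leMod_floor (x + y) n).add S.isSolid (S.leMod_floor_add_one y n).neg
  rw [← sub_eq_add_neg, ← sub_smul, nsmul_add, add_neg_cancel_right] at h
  linarith [S.le_floor h]

theorem floor_unit (n : ℕ) : S.floor u n = n :=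
  le_antisymm
    (LeMod.zsmul_le S.isSolid S.unit_nonneg S.unit_notMem
      ((S.leMod_floor u n).trans S.isSolid (.of_le (natCast_zsmul u n).ge)))
    (S.le_floor (.of_le (natCast_zsmul u n).le))

theorem floor_le {x : α} {N : ℕ} (hN : x ≤ N • u) (n : ℕ) : S.floor x n ≤ n * N := by
  refine LeMod.zsmul_le S.isSolid S.unit_nonneg S.unit_notMem
    ((S.leMod_floor x n).trans S.isSolid (.of_le ?_))
  exact_mod_cast nsmul_le_mul_nsmul hN n

theorem subadditive_neg_floor (x : α) : Subadditive fun n => -(S.floor x n : ℝ) := fun m n => by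
  have : (S.floor x m : ℝ) + S.floor x n ≤ S.floor x (m + n) := by
    exact_mod_cast S.floor_add_floor_le_floor_add x m n
  dsimp only
  linarith

theorem bddBelow_neg_floor_div (x : α) :
    BddBelow (Set.range fun n : ℕ => -(S.floor x n : ℝ) / n) := by
  obtain ⟨N, hN⟩ := S.le_nsmul_unit x
  refine ⟨-N, ?_⟩
  rintro _ ⟨n, rfl⟩
  rcases Nat.eq_zero_or_pos n with rfl | hn
  · simp
  · have : (S.floor x n : ℝ) ≤ n * N := by exact_mod_cast S.floor_le hN n
    rw [le_div_iff₀ (by exact_mod_cast hn)]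
    linarith

/-- `lim floor x n / n`, which exists by Fekete's lemma applied to `-floor x`. -/
noncomputable def character (x : α) : ℝ := -(S.subadditive_neg_floor x).lim

theorem tendsto_floor_div (x : α) :
    Tendsto (fun n : ℕ => (S.floor x n : ℝ) / n) atTop (𝓝 (S.character x)) := by
  have := ((S.subadditive_neg_floor x).tendsto_lim (S.bddBelow_neg_floor_div x)).neg
  simp only [neg_div, neg_neg] at this
  exact this

theorem character_mono {x y : α} (h : LeMod M x y) : S.character x ≤ S.character y :=
  le_of_tendsto_of_tendsto' (S.tendsto_floor_div x) (S.tendsto_floor_div y) fun n => by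
    gcongr; exact_mod_cast S.floor_mono h n

theorem character_add (x y : α) : S.character (x + y) = S.character x + S.character y := by
  have hlow := (S.tendsto_floor_div x).add (S.tendsto_floor_div y)
  have hup := hlow.add tendsto_one_div_atTop_nhds_zero_nat
  rw [add_zero] at hup
  refine tendsto_nhds_unique (S.tendsto_floor_div (x + y))
    (tendsto_of_tendsto_of_tendsto_of_le_of_le hlow hup (fun n => ?_) (fun n => ?_))
  · have : (S.floor x n + S.floor y n : ℝ) ≤ S.floor (x + y) n := by
      exact_mod_cast S.floor_add_floor_le x y n
    rw [← add_div]
    exact div_le_div_of_nonneg_right this n.cast_nonneg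
  · have : (S.floor (x + y) n : ℝ) ≤ S.floor x n + S.floor y n + 1 := by
      exact_mod_cast S.floor_add_le x y n
    rw [← add_div, ← add_div]
    exact div_le_div_of_nonneg_right this n.cast_nonneg

theorem character_unit : S.character u = 1 :=
  tendsto_nhds_unique (S.tendsto_floor_div u) <| tendsto_const_nhds.congr' <| by
    filter_upwards [eventually_ne_atTop 0] with n hn
    rw [S.floor_unit, Int.cast_natCast, div_self (Nat.cast_ne_zero.mpr hn)]

theorem character_eq_of_leMod_of_leMod {x y : α} (hxy : LeMod M x y) (hyx : LeMod M y x) :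
    S.character x = S.character y :=
  le_antisymm (S.character_mono hxy) (S.character_mono hyx)

theorem character_sup (x y : α) : S.character (x ⊔ y) = S.character x ⊔ S.character y := by
  wlog h : LeMod M x y generalizing x y
  · rw [sup_comm, this y x ((LeMod.total S.posPart_mem_or_negPart_mem x y).resolve_left h),
      sup_comm]
  rw [S.character_eq_of_leMod_of_leMod h.sup_left (.of_le le_sup_right),
    sup_eq_right.mpr (S.character_mono h)]

theorem character_inf (x y : α) : S.character (x ⊓ y) = S.character x ⊓ S.character y := by
  wlog h : LeMod M x y generalizing x y
  · rw [inf_comm, this y x ((LeMod.total S.posPart_mem_or_negPart_mem x y).resolve_left h),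
      inf_comm]
  rw [S.character_eq_of_leMod_of_leMod (.of_le inf_le_left) h.inf_right,
    inf_eq_left.mpr (S.character_mono h)]

theorem isUnitalLatticeHom_character : IsUnitalLatticeHom u S.character :=
  ⟨S.character_add, S.character_sup, S.character_inf, S.character_unit⟩

end PrimeIdealAvoidingUnit

theorem exists_isUnitalLatticeHom_pos {u : α} (hu0 : 0 ≤ u) (hu : ∀ x : α, ∃ n : ℕ, x ≤ n • u)
    (harch : ∀ x y : α, (∀ n : ℕ, n • x ≤ y) → x ≤ 0) {a : α} (ha : 0 < a) :
    ∃ φ : α → ℝ, IsUnitalLatticeHom u φ ∧ 0 < φ a := by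
  obtain ⟨n, hn⟩ : ∃ n : ℕ, ¬n • a ≤ u := by
    by_contra! h
    exact ha.not_ge (harch a u h)
  have hb : (n • a - u)⁺ ≠ 0 := by rwa [Ne, posPart_eq_zero, sub_nonpos]
  obtain ⟨M, hM⟩ := exists_maximal_isSolid_notMem hb
  have huM : u ∉ M := fun hu' => by
    obtain ⟨k, hk⟩ := hu (n • a - u)⁺
    exact hM.prop.2 (hM.prop.1.mem_of_nonneg_of_le (M.nsmul_mem hu' k) (posPart_nonneg _) hk)
  let S : PrimeIdealAvoidingUnit u M :=
    ⟨hM.prop.1, posPart_mem_or_negPart_mem hM, huM, hu0, hu⟩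
  -- `n • a ≤ u` modulo `M` would mean `(n • a - u)⁺ ∈ M`
  have hle : LeMod M u (n • a) :=
    (LeMod.total S.posPart_mem_or_negPart_mem _ _).resolve_left hM.prop.2
  have h1 : 1 ≤ n * S.character a := by
    rw [← S.character_unit, ← S.isUnitalLatticeHom_character.map_nsmul]
    exact S.character_mono hle
  exact ⟨S.character, S.isUnitalLatticeHom_character,
    pos_of_mul_pos_right (one_pos.trans_le h1) n.cast_nonneg⟩

theorem evalBounded_injective {u : α} (hu0 : 0 ≤ u) (hu : ∀ x : α, ∃ n : ℕ, x ≤ n • u)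
    (harch : ∀ x y : α, (∀ n : ℕ, n • x ≤ y) → x ≤ 0) : Function.Injective (evalBounded hu) := by
  intro a b hab
  by_contra hne
  have hpos : 0 < |a - b| :=
    (abs_nonneg _).lt_of_ne fun h => hne (sub_eq_zero.mp (eq_zero_of_abs_nonpos h.ge))
  obtain ⟨φ, hφ, hφpos⟩ := exists_isUnitalLatticeHom_pos hu0 hu harch hpos
  have hφab : φ a = φ b := DFunLike.congr_fun hab ⟨φ, hφ⟩
  rw [hφ.map_abs, sub_eq_add_neg, hφ.map_add, hφ.map_neg, hφab, add_neg_cancel, abs_zero] at hφpos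
  exact hφpos.false

end LatticeOrderedGroup

theorem mul_inf_eq_zero_of_inf_eq_zero {R : Type*} [Semiring R] [LinearOrder R] [IsOrderedRing R]
    {a b c : R} (hab : a ⊓ b = 0) (hc : 0 ≤ c) : (c * a) ⊓ b = 0 := by
  rcases le_total a b with h | h
  · rw [inf_eq_left.mpr h] at hab
    rw [hab, mul_zero, inf_eq_left.mpr (hab ▸ h)]
  · rw [inf_eq_right.mpr h] at hab
    rw [hab, inf_eq_right.mpr (mul_nonneg hc (hab ▸ h))]

theorem nonpos_of_forall_nsmul_le {G : Type*} [AddCommGroup G] [LinearOrder G]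
    [IsOrderedAddMonoid G] [Archimedean G] {a b : G} (h : ∀ n : ℕ, n • a ≤ b) : a ≤ 0 := by
  by_contra! ha
  obtain ⟨n, hn⟩ := Archimedean.arch b ha
  have := (h (n + 1)).trans hn
  rw [succ_nsmul, add_le_iff_nonpos_right] at this
  exact ha.not_ge this

namespace BoundedContinuousFunction

variable (X : Type u) [TopologicalSpace X]

noncomputable def luRing : LuRing.{u} where
  R := X →ᵇ ℝ
  add_le_add _ _ c h := add_le_add_right h c
  one_nonneg _ := zero_le_one
  one_strong f := ⟨⌈‖f‖⌉₊, fun x => by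
    simpa using (le_abs_self _).trans ((f.norm_coe_le_norm x).trans (Nat.le_ceil _))⟩
  mul_nonneg f g hf hg x := mul_nonneg (hf x) (hg x)
  f_ring _ _ _ hfg hz :=
    ext fun x => mul_inf_eq_zero_of_inf_eq_zero (DFunLike.congr_fun hfg x) (hz x)

theorem luRing_arch : (luRing X).Arch := fun _ _ h x =>
  nonpos_of_forall_nsmul_le fun n => h n x

end BoundedContinuousFunction

instance LuGroup.isOrderedAddMonoid (L : LuGroup.{u}) : IsOrderedAddMonoid L.G where
  add_le_add_left a b h c := by simpa only [add_comm _ c] using L.add_le_add a b c h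

/-- every Archimedean ℓu-group admits an injective group homomorphism into a
unital Archimedean ℓu-ring, preserving `⊔` and `⊓` and sending `u` to `1`. -/
theorem stmt14 (L : LuGroup.{u}) (hL : L.Arch) :
    ∃ (R : LuRing.{u}) (ε : L.G → R.R),
      R.Arch ∧ Function.Injective ε ∧ LuGroupRingHom L R ε :=
  ⟨BoundedContinuousFunction.luRing (UnitalLatticeHoms L.u), evalBounded L.u_strong,
    BoundedContinuousFunction.luRing_arch _, evalBounded_injective L.u_nonneg L.u_strong hL,
    evalBounded_add L.u_strong, evalBounded_sup L.u_strong, evalBounded_inf L.u_strong,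
    evalBounded_unit L.u_strong⟩
end

section
/- Archimedean Riesz spaces with strong unit have the amalgamation property: if Z, A, B are Archimedean Riesz spaces with strong units and z_A : Z → A, z_B : Z → B are injective morphisms of Riesz spaces with strong unit, then there exist an Archimedean Riesz space E with strong unit and injective morphisms f_A : A → E and f_B : B → E of Riesz spaces with strong unit such that f_A ∘ z_A = f_B ∘ z_B. -/
universe u

/-- A Riesz space with strong unit. -/
structure RieszSp : Type (u + 1) where
  V : Type u
  [grp : AddCommGroup V]
  [mod : Module ℝ V]
  [lat : Lattice V]
  add_le_add : ∀ a b c : V, a ≤ b → c + a ≤ c + b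
  smul_nonneg : ∀ (α : ℝ) (x : V), 0 ≤ α → 0 ≤ x → 0 ≤ α • x
  u : V
  u_nonneg : 0 ≤ u
  u_strong : ∀ x : V, ∃ n : ℕ, x ≤ n • u

attribute [instance] RieszSp.grp RieszSp.mod RieszSp.lat

/-- Archimedean Riesz space. -/
def RieszSp.Arch (U : RieszSp.{u}) : Prop :=
  ∀ x y : U.V, (∀ n : ℕ, n • x ≤ y) → x ≤ 0

/-- A morphism of Riesz spaces with strong unit: a linear map preserving `⊔` and `⊓`
and sending strong unit to strong unit. -/
def RieszSpHom (U W : RieszSp.{u}) (f : U.V → W.V) : Prop :=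
  (∀ x y, f (x + y) = f x + f y) ∧ (∀ (α : ℝ) (x : U.V), f (α • x) = α • f x) ∧
  (∀ x y, f (x ⊔ y) = f x ⊔ f y) ∧ (∀ x y, f (x ⊓ y) = f x ⊓ f y) ∧ f U.u = W.u

/-- A unital f-algebra with strong unit: simultaneously a Riesz space and a unital
ℓu-ring (whose ring identity is the strong unit), with compatible scalar multiplication. -/
structure FuAlg : Type (u + 1) where
  A : Type u
  [ring : CommRing A]
  [mod : Module ℝ A]
  [lat : Lattice A]
  add_le_add : ∀ a b c : A, a ≤ b → c + a ≤ c + b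
  smul_nonneg : ∀ (α : ℝ) (x : A), 0 ≤ α → 0 ≤ x → 0 ≤ α • x
  mul_nonneg : ∀ a b : A, 0 ≤ a → 0 ≤ b → 0 ≤ a * b
  f_ring : ∀ x y z : A, x ⊓ y = 0 → 0 ≤ z → (z * x) ⊓ y = 0
  one_nonneg : (0 : A) ≤ 1
  one_strong : ∀ x : A, ∃ n : ℕ, x ≤ n • (1 : A)
  smul_mul : ∀ (α : ℝ) (x y : A), α • (x * y) = (α • x) * y

attribute [instance] FuAlg.ring FuAlg.mod FuAlg.lat

/-- Archimedean f-algebra. -/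
def FuAlg.Arch (S : FuAlg.{u}) : Prop :=
  ∀ x y : S.A, (∀ n : ℕ, n • x ≤ y) → x ≤ 0

/-- A morphism of unital f-algebras: a ring homomorphism that is linear and
preserves `⊔` and `⊓`. -/
def FuAlgHom (S T : FuAlg.{u}) (f : S.A → T.A) : Prop :=
  (∀ x y, f (x + y) = f x + f y) ∧ (∀ x y, f (x * y) = f x * f y) ∧ f 1 = 1 ∧
  (∀ (α : ℝ) (x : S.A), f (α • x) = α • f x) ∧
  (∀ x y, f (x ⊔ y) = f x ⊔ f y) ∧ (∀ x y, f (x ⊓ y) = f x ⊓ f y)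

/-!
Take for `E` the bounded real functions on the set of pairs `(φ, ψ)` of states (unital real
lattice homomorphisms) of `A` and `B` with `φ ∘ zA = ψ ∘ zB`, and embed `A` and `B` by evaluation.
Evaluation is injective because states separate the points of an Archimedean Riesz space and
every state of `Z` extends along an injective morphism.

States come from prime ideals `M` not containing the unit `u`: modulo `M` the space is totally
ordered, and `x ↦ sup {r | r u ≤ x mod M}` is a state vanishing on `M`. For separation at
`x ≠ 0`, pick `n` with `n|x| ≰ u` and a prime ideal missing `(n|x| - u)⁺`; then it contains
`(n|x| - u)⁻`, so the state satisfies `n φ|x| ≥ 1`. For extension along `f : Z → B`, take a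
prime ideal containing the ideal generated by `f (ker φ)` but not `u`; that ideal misses `u`
because `f` reflects the order.
-/

open Function BoundedContinuousFunction

section MapSup

variable {α β : Type*} [SemilatticeSup α] [SemilatticeSup β] {f : α → β}

theorem monotone_of_map_sup (hsup : ∀ x y, f (x ⊔ y) = f x ⊔ f y) : Monotone f :=
  fun x y h => calc
    f x ≤ f x ⊔ f y := le_sup_left
    _ = f y := by rw [← hsup, sup_eq_right.2 h]

theorem le_of_map_le_of_injective (hf : Injective f) (hsup : ∀ x y, f (x ⊔ y) = f x ⊔ f y)
    {x y : α} (h : f x ≤ f y) : x ≤ y :=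
  sup_eq_right.1 (hf (by rw [hsup, sup_eq_right.2 h]))

end MapSup

theorem map_abs_of_map_add_of_map_sup {α β : Type*} [Lattice α] [AddGroup α] [Lattice β]
    [AddGroup β] {f : α → β} (hadd : ∀ x y, f (x + y) = f x + f y)
    (hsup : ∀ x y, f (x ⊔ y) = f x ⊔ f y) (x : α) : f |x| = |f x| := by
  rw [abs, abs, hsup, ← AddMonoidHom.mk'_apply f hadd, map_neg]

namespace RieszSp

variable {U : RieszSp.{u}}

instance : IsOrderedAddMonoid U.V where
  add_le_add_left a b h c := by simpa only [add_comm _ c] using U.add_le_add a b c h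

instance : PosSMulMono ℝ U.V where
  smul_le_smul_of_nonneg_left a ha b₁ b₂ hb := by
    simpa only [smul_sub, sub_nonneg] using U.smul_nonneg a (b₂ - b₁) ha (sub_nonneg.2 hb)

theorem smul_sup_of_nonneg {t : ℝ} (ht : 0 ≤ t) (x y : U.V) : t • (x ⊔ y) = t • x ⊔ t • y := by
  rcases ht.eq_or_lt with rfl | ht
  · simp
  · exact (OrderIso.smulRight ht).map_sup x y

theorem smul_inf_of_nonneg {t : ℝ} (ht : 0 ≤ t) (x y : U.V) : t • (x ⊓ y) = t • x ⊓ t • y := by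
  rcases ht.eq_or_lt with rfl | ht
  · simp
  · exact (OrderIso.smulRight ht).map_inf x y

theorem abs_smul_of_nonneg {t : ℝ} (ht : 0 ≤ t) (x : U.V) : |t • x| = t • |x| := by
  rw [abs, abs, smul_sup_of_nonneg ht, smul_neg]

theorem eq_zero_of_abs_nonpos {x : U.V} (h : |x| ≤ 0) : x = 0 :=
  le_antisymm ((le_abs_self x).trans h) (neg_nonpos.1 ((neg_le_abs x).trans h))

theorem smul_unit_le_smul_unit {r s : ℝ} (h : r ≤ s) : r • U.u ≤ s • U.u :=
  smul_le_smul_of_nonneg_right h U.u_nonneg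

structure IsState (U : RieszSp.{u}) (φ : U.V → ℝ) : Prop where
  map_add : ∀ x y, φ (x + y) = φ x + φ y
  map_smul : ∀ (t : ℝ) x, φ (t • x) = t * φ x
  map_sup : ∀ x y, φ (x ⊔ y) = φ x ⊔ φ y
  map_inf : ∀ x y, φ (x ⊓ y) = φ x ⊓ φ y
  map_unit : φ U.u = 1

namespace IsState

variable {φ : U.V → ℝ}

theorem map_zero (hφ : IsState U φ) : φ 0 = 0 := by
  simpa using hφ.map_smul 0 0

theorem map_sub (hφ : IsState U φ) (x y : U.V) : φ (x - y) = φ x - φ y :=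
  _root_.map_sub (AddMonoidHom.mk' φ hφ.map_add) x y

theorem map_nsmul (hφ : IsState U φ) (n : ℕ) (x : U.V) : φ (n • x) = n * φ x := by
  rw [← Nat.cast_smul_eq_nsmul ℝ, hφ.map_smul]

theorem mono (hφ : IsState U φ) : Monotone φ := monotone_of_map_sup hφ.map_sup

theorem map_abs (hφ : IsState U φ) (x : U.V) : φ |x| = |φ x| :=
  map_abs_of_map_add_of_map_sup hφ.map_add hφ.map_sup x

theorem abs_le (hφ : IsState U φ) {a : U.V} {n : ℕ} (h : |a| ≤ n • U.u) : |φ a| ≤ n := by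
  simpa [← hφ.map_abs, hφ.map_nsmul, hφ.map_unit] using hφ.mono h

theorem comp {W : RieszSp.{u}} {φ : W.V → ℝ} (hφ : IsState W φ) {f : U.V → W.V}
    (hf : RieszSpHom U W f) : IsState U (φ ∘ f) where
  map_add x y := by simp only [comp_apply, hf.1, hφ.map_add]
  map_smul t x := by simp only [comp_apply, hf.2.1, hφ.map_smul]
  map_sup x y := by simp only [comp_apply, hf.2.2.1, hφ.map_sup]
  map_inf x y := by simp only [comp_apply, hf.2.2.2.1, hφ.map_inf]
  map_unit := by simp only [comp_apply, hf.2.2.2.2, hφ.map_unit]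

end IsState

structure IsIdeal (I : Set U.V) : Prop where
  zero_mem : (0 : U.V) ∈ I
  add_mem {a b : U.V} : a ∈ I → b ∈ I → a + b ∈ I
  mem_of_abs_le {a b : U.V} : b ∈ I → |a| ≤ |b| → a ∈ I

namespace IsIdeal

variable {I : Set U.V}

theorem abs_mem (hI : IsIdeal I) {a : U.V} (ha : a ∈ I) : |a| ∈ I :=
  hI.mem_of_abs_le ha (abs_abs a).le

theorem neg_mem (hI : IsIdeal I) {a : U.V} (ha : a ∈ I) : -a ∈ I :=
  hI.mem_of_abs_le ha (abs_neg a).le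

theorem mem_of_nonneg_of_le (hI : IsIdeal I) {a b : U.V} (ha : 0 ≤ a) (hab : a ≤ b)
    (hb : b ∈ I) : a ∈ I :=
  hI.mem_of_abs_le hb (by rw [abs_of_nonneg ha]; exact hab.trans (le_abs_self b))

theorem nsmul_mem (hI : IsIdeal I) {a : U.V} (ha : a ∈ I) (n : ℕ) : n • a ∈ I := by
  induction n with
  | zero => simpa using hI.zero_mem
  | succ n ih => simpa [succ_nsmul] using hI.add_mem ih ha

theorem smul_mem_of_nonneg (hI : IsIdeal I) {a : U.V} (ha : a ∈ I) {t : ℝ} (ht : 0 ≤ t) :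
    t • a ∈ I := by
  obtain ⟨n, hn⟩ := exists_nat_ge t
  refine hI.mem_of_abs_le (hI.nsmul_mem (hI.abs_mem ha) n) ?_
  rw [abs_smul_of_nonneg ht, abs_of_nonneg (nsmul_nonneg (abs_nonneg a) n),
    ← Nat.cast_smul_eq_nsmul ℝ]
  exact smul_le_smul_of_nonneg_right hn (abs_nonneg a)

theorem smul_mem (hI : IsIdeal I) {a : U.V} (ha : a ∈ I) (t : ℝ) : t • a ∈ I := by
  rcases le_total 0 t with ht | ht
  · exact hI.smul_mem_of_nonneg ha ht
  · simpa using hI.neg_mem (hI.smul_mem_of_nonneg ha (neg_nonneg.2 ht))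

theorem unit_notMem (hI : IsIdeal I) {w : U.V} (hw : w ∉ I) : U.u ∉ I := fun hu => by
  obtain ⟨n, hn⟩ := U.u_strong |w|
  exact hw (hI.mem_of_abs_le (hI.nsmul_mem hu n)
    (by rwa [abs_of_nonneg (nsmul_nonneg U.u_nonneg n)]))

end IsIdeal

theorem isIdeal_singleton_zero : IsIdeal ({0} : Set U.V) where
  zero_mem := rfl
  add_mem ha hb := by rw [ha, hb, add_zero]; rfl
  mem_of_abs_le hb hab := eq_zero_of_abs_nonpos (by rwa [hb, abs_zero] at hab)

theorem isIdeal_sUnion {c : Set (Set U.V)} (hc : ∀ I ∈ c, IsIdeal I) (hchain : IsChain (· ⊆ ·) c)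
    (hne : c.Nonempty) : IsIdeal (⋃₀ c) where
  zero_mem := let ⟨I, hI⟩ := hne; ⟨I, hI, (hc I hI).zero_mem⟩
  add_mem := by
    rintro a b ⟨I, hI, ha⟩ ⟨J, hJ, hb⟩
    rcases hchain.total hI hJ with h | h
    · exact ⟨J, hJ, (hc J hJ).add_mem (h ha) hb⟩
    · exact ⟨I, hI, (hc I hI).add_mem ha (h hb)⟩
  mem_of_abs_le := by
    rintro a b ⟨I, hI, hb⟩ hab
    exact ⟨I, hI, (hc I hI).mem_of_abs_le hb hab⟩

/-- For `0 ≤ a`, the ideal generated by the ideal `I` and `a`. -/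
def adjoin (I : Set U.V) (a : U.V) : Set U.V := {y | ∃ j ∈ I, ∃ n : ℕ, |y| ≤ j + n • a}

theorem IsIdeal.adjoin {I : Set U.V} (hI : IsIdeal I) (a : U.V) : IsIdeal (adjoin I a) where
  zero_mem := ⟨0, hI.zero_mem, 0, by simp⟩
  add_mem := by
    rintro x y ⟨i, hi, m, hx⟩ ⟨j, hj, n, hy⟩
    refine ⟨i + j, hI.add_mem hi hj, m + n, ?_⟩
    calc |x + y| ≤ |x| + |y| := abs_add_le x y
      _ ≤ (i + m • a) + (j + n • a) := _root_.add_le_add hx hy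
      _ = i + j + (m + n) • a := by rw [add_nsmul]; abel
  mem_of_abs_le := by
    rintro x y ⟨j, hj, n, hy⟩ hxy
    exact ⟨j, hj, n, hxy.trans hy⟩

theorem subset_adjoin {I : Set U.V} (hI : IsIdeal I) (a : U.V) : I ⊆ adjoin I a :=
  fun y hy => ⟨|y|, hI.abs_mem hy, 0, by simp⟩

theorem mem_adjoin_self (I : Set U.V) (hI : IsIdeal I) {a : U.V} (ha : 0 ≤ a) : a ∈ adjoin I a :=
  ⟨0, hI.zero_mem, 1, by simp [abs_of_nonneg ha]⟩

structure IsPrimeIdeal (M : Set U.V) : Prop extends IsIdeal M where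
  posPart_mem_or_negPart_mem (x : U.V) : x⁺ ∈ M ∨ x⁻ ∈ M

theorem exists_isPrimeIdeal {I : Set U.V} (hI : IsIdeal I) {w : U.V} (hw : 0 ≤ w) (hwI : w ∉ I) :
    ∃ M, IsPrimeIdeal M ∧ I ⊆ M ∧ w ∉ M := by
  set S := {J | IsIdeal J ∧ I ⊆ J ∧ w ∉ J}
  have hS : ∀ c ⊆ S, IsChain (· ⊆ ·) c → c.Nonempty → ∃ M ∈ S, ∀ J ∈ c, J ⊆ M := by
    rintro c hc hchain ⟨J, hJ⟩
    refine ⟨⋃₀ c, ⟨isIdeal_sUnion (fun J hJ => (hc hJ).1) hchain ⟨J, hJ⟩,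
      (hc hJ).2.1.trans (Set.subset_sUnion_of_mem hJ), ?_⟩, fun _ => Set.subset_sUnion_of_mem⟩
    rintro ⟨J', hJ', hwJ'⟩
    exact (hc hJ').2.2 hwJ'
  obtain ⟨M, hIM, ⟨hM, -, hwM⟩, hmax⟩ := zorn_subset_nonempty S hS I ⟨hI, le_rfl, hwI⟩
  have hw_adjoin : ∀ a, 0 ≤ a → a ∉ M → ∃ j ∈ M, ∃ n : ℕ, w ≤ j + n • a := by
    intro a ha haM
    by_contra! h
    refine haM (hmax ⟨hM.adjoin a, hIM.trans (subset_adjoin hM a), fun ⟨j, hj, n, hn⟩ =>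
      h j hj n ((le_abs_self w).trans hn)⟩ (subset_adjoin hM a) (mem_adjoin_self M hM ha))
  refine ⟨M, ⟨hM, fun x => ?_⟩, hIM, hwM⟩
  by_contra! hx
  obtain ⟨i, hi, m, hm⟩ := hw_adjoin _ (posPart_nonneg x) hx.1
  obtain ⟨j, hj, n, hn⟩ := hw_adjoin _ (negPart_nonneg x) hx.2
  refine hwM (hM.mem_of_nonneg_of_le hw ?_ (hM.add_mem (hM.abs_mem hi) (hM.abs_mem hj)))
  calc w ≤ (|i| + |j| + (m + n) • x⁺) ⊓ (|i| + |j| + (m + n) • x⁻) := by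
        refine le_inf (hm.trans (_root_.add_le_add ?_ ?_)) (hn.trans (_root_.add_le_add ?_ ?_))
        · exact (le_abs_self i).trans (le_add_of_nonneg_right (abs_nonneg j))
        · exact nsmul_le_nsmul_left (posPart_nonneg x) (Nat.le_add_right m n)
        · exact (le_abs_self j).trans (le_add_of_nonneg_left (abs_nonneg i))
        · exact nsmul_le_nsmul_left (negPart_nonneg x) (Nat.le_add_left n m)
    _ = |i| + |j| := by
      rw [← add_inf, ← Nat.cast_smul_eq_nsmul ℝ, ← Nat.cast_smul_eq_nsmul ℝ,
        ← smul_inf_of_nonneg (Nat.cast_nonneg _), posPart_inf_negPart_eq_zero, smul_zero, add_zero]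

/-- `x ≤ y` modulo `M`, i.e. in the quotient `U ⧸ M` when `M` is an ideal. -/
def QLe (M : Set U.V) (x y : U.V) : Prop := ∃ i ∈ M, x ≤ y + i

section QLe

variable {M : Set U.V} {x y z : U.V}

theorem qle_of_le (hM : IsIdeal M) (h : x ≤ y) : QLe M x y :=
  ⟨0, hM.zero_mem, by rwa [add_zero]⟩

theorem QLe.trans (hM : IsIdeal M) : QLe M x y → QLe M y z → QLe M x z
  | ⟨i, hi, hxy⟩, ⟨j, hj, hyz⟩ => ⟨j + i, hM.add_mem hj hi, by
      calc x ≤ y + i := hxy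
        _ ≤ z + j + i := by gcongr
        _ = z + (j + i) := add_assoc z j i⟩

theorem QLe.add (hM : IsIdeal M) {x' y' : U.V} : QLe M x y → QLe M x' y' → QLe M (x + x') (y + y')
  | ⟨i, hi, h⟩, ⟨j, hj, h'⟩ => ⟨i + j, hM.add_mem hi hj, by
      calc x + x' ≤ (y + i) + (y' + j) := by gcongr
        _ = y + y' + (i + j) := by abel⟩

theorem QLe.smul (hM : IsIdeal M) {t : ℝ} (ht : 0 ≤ t) : QLe M x y → QLe M (t • x) (t • y)
  | ⟨i, hi, h⟩ => ⟨t • i, hM.smul_mem hi t, by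
      rw [← smul_add]; exact smul_le_smul_of_nonneg_left h ht⟩

theorem QLe.neg : QLe M x y → QLe M (-y) (-x)
  | ⟨i, hi, h⟩ => ⟨i, hi, calc
      -y = -(y + i) + i := by abel
      _ ≤ -x + i := by gcongr⟩

theorem QLe.sup (hM : IsIdeal M) : QLe M x z → QLe M y z → QLe M (x ⊔ y) z
  | ⟨i, hi, hx⟩, ⟨j, hj, hy⟩ => ⟨|i| + |j|, hM.add_mem (hM.abs_mem hi) (hM.abs_mem hj), sup_le
      (hx.trans (by gcongr; exact (le_abs_self i).trans (le_add_of_nonneg_right (abs_nonneg j))))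
      (hy.trans (by gcongr; exact (le_abs_self j).trans (le_add_of_nonneg_left (abs_nonneg i))))⟩

theorem le_of_qle_smul_unit (hM : IsIdeal M) (hu : U.u ∉ M) {r s : ℝ}
    (h : QLe M (r • U.u) (s • U.u)) : r ≤ s := by
  by_contra! hsr
  obtain ⟨i, hi, h⟩ := h
  have hpos : 0 < r - s := sub_pos.2 hsr
  refine hu ?_
  have : (r - s) • U.u ∈ M := hM.mem_of_nonneg_of_le (_root_.smul_nonneg hpos.le U.u_nonneg)
    (by rwa [sub_smul, sub_le_iff_le_add']) hi
  simpa [smul_smul, inv_mul_cancel₀ hpos.ne'] using hM.smul_mem this (r - s)⁻¹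

theorem IsPrimeIdeal.qle_total (hM : IsPrimeIdeal M) (x y : U.V) : QLe M x y ∨ QLe M y x :=
  (hM.posPart_mem_or_negPart_mem (x - y)).imp
    (fun h => ⟨_, h, sub_le_iff_le_add'.1 (le_posPart _)⟩)
    (fun h => ⟨_, h, sub_le_iff_le_add'.1 (by simpa using neg_le_negPart (x - y))⟩)

end QLe

/-- `c` is the real number that `x` represents modulo `M`. -/
def IsValue (M : Set U.V) (x : U.V) (c : ℝ) : Prop :=
  ∀ ε > 0, QLe M ((c - ε) • U.u) x ∧ QLe M x ((c + ε) • U.u)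

namespace IsValue

variable {M : Set U.V} {x y : U.V} {c d : ℝ}

theorem le (hM : IsIdeal M) (hu : U.u ∉ M) (hc : IsValue M x c) (hd : IsValue M x d) :
    c ≤ d := by
  refine le_of_forall_pos_le_add fun ε hε => ?_
  have h := ((hc (ε / 2) (by positivity)).1.trans hM (hd (ε / 2) (by positivity)).2)
  linarith [le_of_qle_smul_unit hM hu h]

theorem unique (hM : IsIdeal M) (hu : U.u ∉ M) (hc : IsValue M x c) (hd : IsValue M x d) :
    c = d :=
  le_antisymm (hc.le hM hu hd) (hd.le hM hu hc)

theorem of_mem (hM : IsIdeal M) {i : U.V} (hi : i ∈ M) : IsValue M i 0 := fun ε hε =>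
  ⟨⟨-i, hM.neg_mem hi, by simpa using _root_.smul_nonneg hε.le U.u_nonneg⟩,
    ⟨i, hi, le_add_of_nonneg_left (by simpa using _root_.smul_nonneg hε.le U.u_nonneg)⟩⟩

theorem smul_unit (hM : IsIdeal M) (r : ℝ) : IsValue M (r • U.u) r := fun ε hε =>
  ⟨qle_of_le hM (smul_unit_le_smul_unit (by linarith)),
    qle_of_le hM (smul_unit_le_smul_unit (by linarith))⟩

theorem add (hM : IsIdeal M) (hx : IsValue M x c) (hy : IsValue M y d) :
    IsValue M (x + y) (c + d) := by
  intro ε hε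
  obtain ⟨hx₁, hx₂⟩ := hx (ε / 2) (by positivity)
  obtain ⟨hy₁, hy₂⟩ := hy (ε / 2) (by positivity)
  constructor
  · convert hx₁.add hM hy₁ using 1
    rw [← add_smul]; ring_nf
  · convert hx₂.add hM hy₂ using 1
    rw [← add_smul]; ring_nf

theorem neg (hx : IsValue M x c) : IsValue M (-x) (-c) := fun ε hε => by
  obtain ⟨hx₁, hx₂⟩ := hx ε hε
  exact ⟨by rw [← neg_add', neg_smul]; exact hx₂.neg,
    by rw [neg_add_eq_sub, ← neg_sub, neg_smul]; exact hx₁.neg⟩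

theorem smul_of_nonneg (hM : IsIdeal M) (hx : IsValue M x c) {t : ℝ} (ht : 0 ≤ t) :
    IsValue M (t • x) (t * c) := by
  rcases ht.eq_or_lt with rfl | ht
  · simpa using smul_unit hM 0
  intro ε hε
  obtain ⟨hx₁, hx₂⟩ := hx (ε / t) (by positivity)
  constructor
  · convert hx₁.smul hM ht.le using 1
    rw [smul_smul, mul_sub, mul_div_cancel₀ _ ht.ne']
  · convert hx₂.smul hM ht.le using 1
    rw [smul_smul, mul_add, mul_div_cancel₀ _ ht.ne']

theorem smul (hM : IsIdeal M) (hx : IsValue M x c) (t : ℝ) : IsValue M (t • x) (t * c) := by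
  rcases le_total 0 t with ht | ht
  · exact hx.smul_of_nonneg hM ht
  · simpa using hx.neg.smul_of_nonneg hM (neg_nonneg.2 ht)

theorem sup (hM : IsIdeal M) (hx : IsValue M x c) (hy : IsValue M y d) :
    IsValue M (x ⊔ y) (c ⊔ d) := by
  intro ε hε
  obtain ⟨hx₁, hx₂⟩ := hx ε hε
  obtain ⟨hy₁, hy₂⟩ := hy ε hε
  refine ⟨?_, (hx₂.trans hM (qle_of_le hM ?_)).sup hM (hy₂.trans hM (qle_of_le hM ?_))⟩
  · rcases le_total c d with h | h
    · rw [sup_eq_right.2 h]; exact hy₁.trans hM (qle_of_le hM le_sup_right)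
    · rw [sup_eq_left.2 h]; exact hx₁.trans hM (qle_of_le hM le_sup_left)
  · exact smul_unit_le_smul_unit (by gcongr; exact le_sup_left)
  · exact smul_unit_le_smul_unit (by gcongr; exact le_sup_right)

theorem inf (hM : IsIdeal M) (hx : IsValue M x c) (hy : IsValue M y d) :
    IsValue M (x ⊓ y) (c ⊓ d) := by
  simpa [neg_sup] using (hx.neg.sup hM hy.neg).neg

end IsValue

noncomputable def primeState (M : Set U.V) (x : U.V) : ℝ := sSup {r : ℝ | QLe M (r • U.u) x}

section PrimeState

variable {M : Set U.V}

theorem isValue_primeState (hM : IsPrimeIdeal M) (hu : U.u ∉ M) (x : U.V) :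
    IsValue M x (primeState M x) := by
  have hI := hM.toIsIdeal
  obtain ⟨m, hm⟩ := U.u_strong (-x)
  obtain ⟨n, hn⟩ := U.u_strong x
  have hne : {r : ℝ | QLe M (r • U.u) x}.Nonempty :=
    ⟨-m, qle_of_le hI (by rw [neg_smul, Nat.cast_smul_eq_nsmul, neg_le]; exact hm)⟩
  have hbdd : BddAbove {r : ℝ | QLe M (r • U.u) x} := ⟨n, fun r hr =>
    le_of_qle_smul_unit hI hu (hr.trans hI (qle_of_le hI (by rwa [Nat.cast_smul_eq_nsmul])))⟩
  intro ε hε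
  constructor
  · obtain ⟨r, hr, hlt⟩ := exists_lt_of_lt_csSup hne (sub_lt_self (primeState M x) hε)
    exact (qle_of_le hI (smul_unit_le_smul_unit hlt.le)).trans hI hr
  · refine (hM.qle_total _ _).resolve_right fun h => ?_
    linarith [le_csSup hbdd h, show primeState M x = sSup _ from rfl]

theorem isState_primeState (hM : IsPrimeIdeal M) (hu : U.u ∉ M) : IsState U (primeState M) := by
  have hI := hM.toIsIdeal
  have hv := isValue_primeState hM hu
  exact {
    map_add x y := (hv (x + y)).unique hI hu ((hv x).add hI (hv y))
    map_smul t x := (hv (t • x)).unique hI hu ((hv x).smul hI t)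
    map_sup x y := (hv (x ⊔ y)).unique hI hu ((hv x).sup hI (hv y))
    map_inf x y := (hv (x ⊓ y)).unique hI hu ((hv x).inf hI (hv y))
    map_unit := (hv U.u).unique hI hu (by simpa using IsValue.smul_unit hI 1) }

theorem primeState_eq_zero (hM : IsPrimeIdeal M) (hu : U.u ∉ M) {i : U.V} (hi : i ∈ M) :
    primeState M i = 0 :=
  (isValue_primeState hM hu i).unique hM.toIsIdeal hu (IsValue.of_mem hM.toIsIdeal hi)

end PrimeState

theorem exists_isState_ne_zero (hU : U.Arch) {x : U.V} (hx : x ≠ 0) :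
    ∃ φ : U.V → ℝ, IsState U φ ∧ φ x ≠ 0 := by
  obtain ⟨n, hn⟩ : ∃ n : ℕ, ¬ n • |x| ≤ U.u := by
    by_contra! h
    exact hx (eq_zero_of_abs_nonpos (hU _ _ h))
  set d := n • |x| - U.u
  obtain ⟨M, hM, -, hdM⟩ := exists_isPrimeIdeal isIdeal_singleton_zero (posPart_nonneg d)
    fun h => hn (sub_nonpos.1 (posPart_eq_zero.1 h))
  have hu := hM.unit_notMem hdM
  have hφ := isState_primeState hM hu
  have hd : 0 ≤ primeState M d := by
    rw [← posPart_sub_negPart d, hφ.map_sub,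
      primeState_eq_zero hM hu ((hM.posPart_mem_or_negPart_mem d).resolve_left hdM), sub_zero]
    exact hφ.map_zero ▸ hφ.mono (posPart_nonneg d)
  rw [hφ.map_sub, hφ.map_nsmul, hφ.map_abs, hφ.map_unit] at hd
  refine ⟨primeState M, hφ, fun h => ?_⟩
  rw [h, abs_zero, mul_zero] at hd
  linarith

theorem exists_isState_comp_eq {Z B : RieszSp.{u}} {f : Z.V → B.V} (hf : RieszSpHom Z B f)
    (hfi : Injective f) {φ : Z.V → ℝ} (hφ : IsState Z φ) :
    ∃ ψ : B.V → ℝ, IsState B ψ ∧ ψ ∘ f = φ := by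
  obtain ⟨hf_add, hf_smul, hf_sup, -, hf_unit⟩ := hf
  have hf_zero : f 0 = 0 := by simpa using hf_smul 0 0
  set I : Set B.V := {b | ∃ z, 0 ≤ z ∧ φ z = 0 ∧ |b| ≤ f z}
  have hI : IsIdeal I := {
    zero_mem := ⟨0, le_rfl, hφ.map_zero, by rw [abs_zero, hf_zero]⟩
    add_mem := fun ⟨z, hz, hφz, ha⟩ ⟨z', hz', hφz', hb⟩ =>
      ⟨z + z', add_nonneg hz hz', by rw [hφ.map_add, hφz, hφz', add_zero],
        (abs_add_le _ _).trans (by rw [hf_add]; exact _root_.add_le_add ha hb)⟩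
    mem_of_abs_le := fun ⟨z, hz, hφz, hb⟩ hab => ⟨z, hz, hφz, hab.trans hb⟩ }
  have huI : B.u ∉ I := fun ⟨z, _, hφz, hle⟩ => by
    have hz : Z.u ≤ z := le_of_map_le_of_injective hfi hf_sup
      (by rw [hf_unit]; exact (le_abs_self _).trans hle)
    linarith [hφ.mono hz, hφ.map_unit]
  obtain ⟨M, hM, hIM, huM⟩ := exists_isPrimeIdeal hI B.u_nonneg huI
  have hψ := isState_primeState hM huM
  refine ⟨primeState M, hψ, funext fun z => ?_⟩
  -- `z - φ(z) u` lies in the kernel of `φ`, so its image lies in `I ⊆ M`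
  set c := z + (-φ z) • Z.u
  have hφc : φ c = 0 := by rw [hφ.map_add, hφ.map_smul, hφ.map_unit]; ring
  have hc : f c ∈ M := hIM ⟨|c|, abs_nonneg c, by rw [hφ.map_abs, hφc, abs_zero],
    (map_abs_of_map_add_of_map_sup hf_add hf_sup c).ge⟩
  have := primeState_eq_zero hM huM hc
  rw [hf_add, hf_smul, hf_unit, hψ.map_add, hψ.map_smul, hψ.map_unit] at this
  simp only [comp_apply]
  linarith

section BoundedContinuous

variable (X : Type u) [TopologicalSpace X]

noncomputable def ofBoundedContinuous : RieszSp.{u} where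
  V := X →ᵇ ℝ
  add_le_add _ _ c h p := by simpa using h p
  smul_nonneg t f ht hf p := mul_nonneg ht (hf p)
  u := 1
  u_nonneg _ := zero_le_one
  u_strong f := ⟨⌈‖f‖⌉₊, fun p => by
    simpa using (le_abs_self _).trans ((f.norm_coe_le_norm p).trans (Nat.le_ceil ‖f‖))⟩

theorem arch_ofBoundedContinuous : (ofBoundedContinuous X).Arch := fun (f g : X →ᵇ ℝ) h p => by
  change f p ≤ 0
  by_contra! hp
  obtain ⟨n, hn⟩ := exists_nat_gt (g p / f p)
  have : n • f p ≤ g p := h n p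
  rw [nsmul_eq_mul] at this
  linarith [(div_lt_iff₀ hp).1 hn]

variable {X} [DiscreteTopology X] {φ : X → U.V → ℝ}

noncomputable def evalStates (hφ : ∀ p, IsState U (φ p)) (a : U.V) : X →ᵇ ℝ :=
  ofNormedAddCommGroupDiscrete (fun p => φ p a) _ fun p =>
    (hφ p).abs_le (U.u_strong |a|).choose_spec

theorem evalStates_apply (hφ : ∀ p, IsState U (φ p)) (a : U.V) (p : X) :
    evalStates hφ a p = φ p a := rfl

theorem rieszSpHom_evalStates (hφ : ∀ p, IsState U (φ p)) :
    RieszSpHom U (ofBoundedContinuous X) (evalStates hφ) :=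
  ⟨fun x y => ext fun p => (hφ p).map_add x y, fun t x => ext fun p => (hφ p).map_smul t x,
    fun x y => ext fun p => (hφ p).map_sup x y, fun x y => ext fun p => (hφ p).map_inf x y,
    ext fun p => (hφ p).map_unit⟩

theorem evalStates_injective (hφ : ∀ p, IsState U (φ p)) (hsep : ∀ x ≠ 0, ∃ p, φ p x ≠ 0) :
    Injective (evalStates hφ) := fun a b hab => by
  by_contra hne
  obtain ⟨p, hp⟩ := hsep (a - b) (sub_ne_zero.2 hne)
  exact hp (by rw [(hφ p).map_sub, ← evalStates_apply hφ, ← evalStates_apply hφ, hab, sub_self])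

end BoundedContinuous

end RieszSp

open RieszSp in
theorem stmt16_general (Z A B : RieszSp.{u}) (hA : A.Arch) (hB : B.Arch)
    (zA : Z.V → A.V) (zB : Z.V → B.V)
    (hzA : RieszSpHom Z A zA) (hzB : RieszSpHom Z B zB)
    (hiA : Function.Injective zA) (hiB : Function.Injective zB) :
    ∃ (E : RieszSp.{u}) (fA : A.V → E.V) (fB : B.V → E.V),
      E.Arch ∧ RieszSpHom A E fA ∧ RieszSpHom B E fB ∧
      Function.Injective fA ∧ Function.Injective fB ∧ fA ∘ zA = fB ∘ zB := by
  let P := {p : (A.V → ℝ) × (B.V → ℝ) // IsState A p.1 ∧ IsState B p.2 ∧ p.1 ∘ zA = p.2 ∘ zB}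
  let : TopologicalSpace P := ⊥
  have : DiscreteTopology P := ⟨rfl⟩
  have hPA (p : P) : IsState A p.1.1 := p.2.1
  have hPB (p : P) : IsState B p.1.2 := p.2.2.1
  refine ⟨ofBoundedContinuous P, evalStates hPA, evalStates hPB, arch_ofBoundedContinuous P,
    rieszSpHom_evalStates hPA, rieszSpHom_evalStates hPB,
    evalStates_injective hPA fun a ha => ?_, evalStates_injective hPB fun b hb => ?_,
    funext fun z => ext fun p => congrFun p.2.2.2 z⟩
  · obtain ⟨φ, hφ, hφa⟩ := exists_isState_ne_zero hA ha
    obtain ⟨ψ, hψ, hψφ⟩ := exists_isState_comp_eq hzB hiB (hφ.comp hzA)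
    exact ⟨⟨(φ, ψ), hφ, hψ, hψφ.symm⟩, hφa⟩
  · obtain ⟨ψ, hψ, hψb⟩ := exists_isState_ne_zero hB hb
    obtain ⟨φ, hφ, hφψ⟩ := exists_isState_comp_eq hzA hiA (hψ.comp hzB)
    exact ⟨⟨(φ, ψ), hφ, hψ, hφψ⟩, hψb⟩

/-- Archimedean Riesz spaces with strong unit have the amalgamation property. -/
theorem stmt16 (Z A B : RieszSp.{u}) (hZ : Z.Arch) (hA : A.Arch) (hB : B.Arch)
    (zA : Z.V → A.V) (zB : Z.V → B.V)
    (hzA : RieszSpHom Z A zA) (hzB : RieszSpHom Z B zB)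
    (hiA : Function.Injective zA) (hiB : Function.Injective zB) :
    ∃ (E : RieszSp.{u}) (fA : A.V → E.V) (fB : B.V → E.V),
      E.Arch ∧ RieszSpHom A E fA ∧ RieszSpHom B E fB ∧
      Function.Injective fA ∧ Function.Injective fB ∧ fA ∘ zA = fB ∘ zB :=
  stmt16_general Z A B hA hB zA zB hzA hzB hiA hiB
end

section
/- Let n ≥ 1 and let F be a semisimple MV-algebra with elements x₁, …, x_n that freely generate F: for every MV-algebra M and every m₁, …, m_n ∈ M there is a unique MV-algebra homomorphism F → M sending each x_i to m_i. If (T, ε) is a tensor PMV-algebra of F, then T is freely generated by ε(x₁), …, ε(x_n) in the class of unital commutative semisimple PMV-algebras: for every unital commutative semisimple PMV-algebra P and every p₁, …, p_n ∈ P there is a unique PMV-algebra homomorphism h : T → P with h(ε(x_i)) = p_i for each i. -/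
universe u v w

/-- An MV-algebra structure on the type `A`. -/
structure MVAlg (A : Type u) where
  oplus : A → A → A
  star : A → A
  zero : A
  oplus_comm : ∀ x y, oplus x y = oplus y x
  oplus_assoc : ∀ x y z, oplus (oplus x y) z = oplus x (oplus y z)
  oplus_zero : ∀ x, oplus x zero = x
  star_star : ∀ x, star (star x) = x
  oplus_one : ∀ x, oplus x (star zero) = star zero
  luk : ∀ x y, oplus (star (oplus (star x) y)) y = oplus (star (oplus (star y) x)) x

namespace MVAlg

variable {A : Type u}

/-- The top element `1 := 0*`. -/
def one (M : MVAlg A) : A := M.star M.zero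

/-- The underlying order: `x ≤ y` iff `x* ⊕ y = 1`. -/
def le (M : MVAlg A) (x y : A) : Prop := M.oplus (M.star x) y = M.one

/-- An ideal: contains `0`, closed under `⊕` and downward closed. -/
def IsIdeal (M : MVAlg A) (I : Set A) : Prop :=
  M.zero ∈ I ∧ (∀ x ∈ I, ∀ y ∈ I, M.oplus x y ∈ I) ∧ (∀ x y, M.le x y → y ∈ I → x ∈ I)

/-- A maximal proper ideal. -/
def IsMaximalIdeal (M : MVAlg A) (I : Set A) : Prop :=
  M.IsIdeal I ∧ I ≠ Set.univ ∧ ∀ J, M.IsIdeal J → J ≠ Set.univ → I ⊆ J → J = I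

/-- Semisimplicity: the intersection of all maximal proper ideals is `{0}`. -/
def Semisimple (M : MVAlg A) : Prop :=
  {x | ∀ I, M.IsMaximalIdeal I → x ∈ I} = {M.zero}

end MVAlg

/-- Homomorphisms of MV-algebras preserve `⊕`, `*` and `0`. -/
def MVHom {A : Type u} {B : Type v} (M : MVAlg A) (N : MVAlg B) (f : A → B) : Prop :=
  (∀ x y, f (M.oplus x y) = N.oplus (f x) (f y)) ∧
  (∀ x, f (M.star x) = N.star (f x)) ∧ f M.zero = N.zero

/-- A unital commutative PMV-algebra. -/
structure PMVAlg (A : Type u) extends MVAlg A where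
  mul : A → A → A
  mul_assoc : ∀ x y z, mul (mul x y) z = mul x (mul y z)
  mul_comm : ∀ x y, mul x y = mul y x
  mul_one : ∀ x, mul x toMVAlg.one = x
  mul_linear_right : ∀ x y z, toMVAlg.le y (toMVAlg.star z) →
    mul x (toMVAlg.oplus y z) = toMVAlg.oplus (mul x y) (mul x z)
  mul_linear_left : ∀ x y z, toMVAlg.le x (toMVAlg.star y) →
    mul (toMVAlg.oplus x y) z = toMVAlg.oplus (mul x z) (mul y z)

/-- Semisimplicity of a PMV-algebra is semisimplicity of its MV-reduct. -/
def PMVAlg.Semisimple {A : Type u} (P : PMVAlg A) : Prop := P.toMVAlg.Semisimple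

/-- Homomorphisms of PMV-algebras. -/
def PMVHom {A : Type u} {B : Type v} (P : PMVAlg A) (Q : PMVAlg B) (f : A → B) : Prop :=
  MVHom P.toMVAlg Q.toMVAlg f ∧ ∀ x y, f (P.mul x y) = Q.mul (f x) (f y)

/-- A Riesz MV-algebra: an MV-algebra with a scalar multiplication by elements of `[0,1]`. -/
structure RieszMVAlg (A : Type u) extends MVAlg A where
  smul : ℝ → A → A
  smul_oplus : ∀ α : ℝ, α ∈ Set.Icc (0:ℝ) 1 → ∀ x y, toMVAlg.le x (toMVAlg.star y) →
    smul α (toMVAlg.oplus x y) = toMVAlg.oplus (smul α x) (smul α y)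
  add_smul : ∀ α β : ℝ, α ∈ Set.Icc (0:ℝ) 1 → β ∈ Set.Icc (0:ℝ) 1 → α + β ≤ 1 → ∀ x,
    smul (α + β) x = toMVAlg.oplus (smul α x) (smul β x) ∧
    toMVAlg.le (smul α x) (toMVAlg.star (smul β x))
  mul_smul : ∀ α β : ℝ, α ∈ Set.Icc (0:ℝ) 1 → β ∈ Set.Icc (0:ℝ) 1 → ∀ x,
    smul (α * β) x = smul α (smul β x)
  one_smul : ∀ x, smul 1 x = x

/-- Semisimplicity of a Riesz MV-algebra. -/
def RieszMVAlg.Semisimple {A : Type u} (R : RieszMVAlg A) : Prop := R.toMVAlg.Semisimple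

/-- Homomorphisms of Riesz MV-algebras. -/
def RieszMVHom {A : Type u} {B : Type v} (R : RieszMVAlg A) (S : RieszMVAlg B) (f : A → B) : Prop :=
  MVHom R.toMVAlg S.toMVAlg f ∧
  ∀ α : ℝ, α ∈ Set.Icc (0:ℝ) 1 → ∀ x, f (R.smul α x) = S.smul α (f x)

/-- A unital commutative fMV-algebra. -/
structure FMVAlg (A : Type u) extends PMVAlg A, RieszMVAlg A where
  smul_mul_left : ∀ α : ℝ, α ∈ Set.Icc (0:ℝ) 1 → ∀ x y,
    smul α (mul x y) = mul (smul α x) y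
  smul_mul_right : ∀ α : ℝ, α ∈ Set.Icc (0:ℝ) 1 → ∀ x y,
    smul α (mul x y) = mul x (smul α y)

/-- Semisimplicity of an fMV-algebra. -/
def FMVAlg.Semisimple {A : Type u} (F : FMVAlg A) : Prop := F.toMVAlg.Semisimple

/-- Homomorphisms of fMV-algebras preserve `⊕`, `*`, `0`, `·` and scalar multiplication. -/
def FMVHom {A : Type u} {B : Type v} (F : FMVAlg A) (G : FMVAlg B) (f : A → B) : Prop :=
  MVHom F.toMVAlg G.toMVAlg f ∧
  (∀ x y, f (F.mul x y) = G.mul (f x) (f y)) ∧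
  (∀ α : ℝ, α ∈ Set.Icc (0:ℝ) 1 → ∀ x, f (F.smul α x) = G.smul α (f x))

/-- `(T, ε)` is a tensor PMV-algebra of the semisimple MV-algebra `M`. -/
def IsTensorPMV {A : Type u} (M : MVAlg A) {T : Type v} (P : PMVAlg T) (ε : A → T) : Prop :=
  P.Semisimple ∧ MVHom M P.toMVAlg ε ∧ Function.Injective ε ∧
  ∀ (B : Type w) (Q : PMVAlg B), Q.Semisimple → ∀ f : A → B, MVHom M Q.toMVAlg f →
    ∃! g : T → B, PMVHom P Q g ∧ g ∘ ε = f

/-!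
Existence: the PMV-subalgebra `S` of `P` generated by the `pᵢ` is countable and, as a subalgebra
of a semisimple algebra, semisimple. Freeness of `F` gives an MV-homomorphism `F → S` sending
`xᵢ ↦ pᵢ`, and the universal property of `(T, ε)` lifts it to `T → S ⊆ P`.

Uniqueness: two such homomorphisms `h₁, h₂` agree on `ε(F)` because `F` is free. For a maximal
ideal `I` of `P`, the quotient `P/I` is simple, so both `T → P/I` lift the same map on `F` and
coincide; as `P` is semisimple, `h₁ = h₂`.

The universal property of `(T, ε)` only speaks about targets in one fixed universe. Both targets
used above are small, however: `S` is countable, and a simple MV-algebra injects into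
`Set (List Bool)` by recording which words of doublings `z ↦ z ⊕ z`, `z ↦ z ⊙ z` send an element
to `0` (a binary expansion of its real value). So they can be transported into that universe.
-/

namespace MVAlg

variable {A : Type*} (M : MVAlg A)

/-- Łukasiewicz product `a ⊙ b`. -/
def odot (a b : A) : A := M.star (M.oplus (M.star a) (M.star b))

/-- Truncated difference `a ⊖ b`. -/
def msub (a b : A) : A := M.star (M.oplus (M.star a) b)

def vee (a b : A) : A := M.oplus (M.msub a b) b

def wedge (a b : A) : A := M.star (M.vee (M.star a) (M.star b))

def nsmul : ℕ → A → A
  | 0, _ => M.zero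
  | n + 1, a => M.oplus a (nsmul n a)

variable {M}

lemma star_injective : Function.Injective M.star := fun a b h => by
  simpa only [M.star_star] using congrArg M.star h

lemma zero_oplus (a : A) : M.oplus M.zero a = a := by
  rw [M.oplus_comm]; exact M.oplus_zero a

lemma star_one : M.star M.one = M.zero := M.star_star _

lemma oplus_one' (a : A) : M.oplus a M.one = M.one := M.oplus_one a

lemma one_oplus (a : A) : M.oplus M.one a = M.one := by
  rw [M.oplus_comm]; exact M.oplus_one a

lemma oplus_left_comm (a b c : A) : M.oplus a (M.oplus b c) = M.oplus b (M.oplus a c) := by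
  rw [← M.oplus_assoc, M.oplus_comm a b, M.oplus_assoc]

lemma star_oplus_self (a : A) : M.oplus (M.star a) a = M.one := by
  have h := M.luk a M.one
  rw [oplus_one', star_one, zero_oplus] at h
  exact h.symm

lemma oplus_star_self (a : A) : M.oplus a (M.star a) = M.one := by
  rw [M.oplus_comm]; exact star_oplus_self a

lemma le_refl (a : A) : M.le a a := star_oplus_self a

lemma le_one (a : A) : M.le a M.one := oplus_one' _

lemma zero_le (a : A) : M.le M.zero a := one_oplus a

lemma le_antisymm {a b : A} (hab : M.le a b) (hba : M.le b a) : a = b := by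
  have h := M.luk a b
  rwa [show M.oplus (M.star a) b = M.one from hab, show M.oplus (M.star b) a = M.one from hba,
    star_one, zero_oplus, zero_oplus, eq_comm] at h

lemma vee_def (a b : A) : M.vee a b = M.oplus (M.msub a b) b := rfl

lemma vee_comm (a b : A) : M.vee a b = M.vee b a := M.luk a b

lemma le_vee_left (a b : A) : M.le a (M.vee a b) := by
  show M.oplus (M.star a) (M.oplus (M.star (M.oplus (M.star a) b)) b) = M.one
  rw [oplus_left_comm, star_oplus_self]

lemma le_vee_right (a b : A) : M.le b (M.vee a b) := by
  show M.oplus (M.star b) (M.oplus (M.star (M.oplus (M.star a) b)) b) = M.one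
  rw [oplus_left_comm, star_oplus_self, oplus_one']

lemma vee_eq_right {a b : A} (h : M.le a b) : M.vee a b = b := by
  show M.oplus (M.star (M.oplus (M.star a) b)) b = b
  rw [show M.oplus (M.star a) b = M.one from h, star_one, zero_oplus]

lemma le_trans {a b c : A} (hab : M.le a b) (hbc : M.le b c) : M.le a c := by
  show M.oplus (M.star a) c = M.one
  rw [← vee_eq_right hbc, vee_comm]
  show M.oplus (M.star a) (M.oplus (M.star (M.oplus (M.star c) b)) b) = M.one
  rw [oplus_left_comm, show M.oplus (M.star a) b = M.one from hab, oplus_one']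

lemma eq_zero_of_le_zero {a : A} (h : M.le a M.zero) : a = M.zero :=
  le_antisymm h (zero_le a)

lemma oplus_msub_of_le {a b : A} (h : M.le a b) : M.oplus a (M.msub b a) = b := by
  have hl := M.luk a b
  rw [show M.oplus (M.star a) b = M.one from h, star_one, zero_oplus] at hl
  rw [M.oplus_comm]; exact hl.symm

lemma le_oplus_right (a c : A) : M.le a (M.oplus a c) := by
  show M.oplus (M.star a) (M.oplus a c) = M.one
  rw [← M.oplus_assoc, star_oplus_self, one_oplus]

lemma le_oplus_left (a c : A) : M.le a (M.oplus c a) := by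
  rw [M.oplus_comm]; exact le_oplus_right a c

lemma oplus_le_oplus_right {a b : A} (c : A) (h : M.le a b) :
    M.le (M.oplus a c) (M.oplus b c) := by
  show M.oplus (M.star (M.oplus a c)) (M.oplus b c) = M.one
  rw [← oplus_msub_of_le h, M.oplus_comm a (M.msub b a), M.oplus_assoc, oplus_left_comm,
    star_oplus_self, oplus_one']

lemma oplus_le_oplus {a b c d : A} (h₁ : M.le a b) (h₂ : M.le c d) :
    M.le (M.oplus a c) (M.oplus b d) := by
  refine le_trans (oplus_le_oplus_right c h₁) ?_
  rw [M.oplus_comm b c, M.oplus_comm b d]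
  exact oplus_le_oplus_right b h₂

lemma star_le_star {a b : A} (h : M.le a b) : M.le (M.star b) (M.star a) := by
  show M.oplus (M.star (M.star b)) (M.star a) = M.one
  rw [M.star_star, M.oplus_comm]; exact h

lemma le_iff_msub_eq_zero {a b : A} : M.le a b ↔ M.msub a b = M.zero := by
  refine ⟨fun h => ?_, fun h => star_injective (M := M) ?_⟩
  · show M.star (M.oplus (M.star a) b) = M.zero
    rw [show M.oplus (M.star a) b = M.one from h, star_one]
  · rw [star_one]; exact h

lemma msub_eq_odot (a b : A) : M.msub a b = M.odot a (M.star b) := by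
  simp only [msub, odot, M.star_star]

lemma star_odot (a b : A) : M.star (M.odot a b) = M.oplus (M.star a) (M.star b) :=
  M.star_star _

lemma star_oplus (a b : A) : M.star (M.oplus a b) = M.odot (M.star a) (M.star b) := by
  simp only [odot, M.star_star]

lemma odot_comm (a b : A) : M.odot a b = M.odot b a := by
  simp only [odot, M.oplus_comm]

lemma odot_assoc (a b c : A) : M.odot (M.odot a b) c = M.odot a (M.odot b c) := by
  simp only [odot, M.star_star, M.oplus_assoc]

lemma odot_le_left (a b : A) : M.le (M.odot a b) a := by
  show M.oplus (M.star (M.odot a b)) a = M.one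
  rw [star_odot, M.oplus_comm, ← M.oplus_assoc, oplus_star_self, one_oplus]

lemma odot_le_right (a b : A) : M.le (M.odot a b) b := by
  rw [odot_comm]; exact odot_le_left b a

lemma msub_le (a b : A) : M.le (M.msub a b) a := by
  rw [msub_eq_odot]; exact odot_le_left _ _

lemma msub_le_star (a b : A) : M.le (M.msub a b) (M.star b) := by
  rw [msub_eq_odot]; exact odot_le_right _ _

lemma le_star_msub (a b : A) : M.le b (M.star (M.msub a b)) := by
  simpa only [M.star_star] using star_le_star (msub_le_star (M := M) a b)

lemma zero_odot (a : A) : M.odot M.zero a = M.zero := by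
  show M.star (M.oplus M.one (M.star a)) = M.zero
  rw [one_oplus, star_one]

lemma odot_star_self (a : A) : M.odot a (M.star a) = M.zero := by
  show M.star (M.oplus (M.star a) (M.star (M.star a))) = M.zero
  rw [M.star_star, star_oplus_self, star_one]

lemma odot_le_odot_right {a b : A} (c : A) (h : M.le a b) :
    M.le (M.odot a c) (M.odot b c) :=
  star_le_star (oplus_le_oplus_right (M.star c) (star_le_star h))

lemma odot_le_odot {a b c d : A} (h₁ : M.le a b) (h₂ : M.le c d) :
    M.le (M.odot a c) (M.odot b d) := by
  refine le_trans (odot_le_odot_right c h₁) ?_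
  rw [odot_comm b c, odot_comm b d]
  exact odot_le_odot_right b h₂

lemma le_iff_odot_star_eq_zero {a b : A} : M.le a b ↔ M.odot a (M.star b) = M.zero := by
  rw [le_iff_msub_eq_zero, msub_eq_odot]

lemma odot_star_le (u v : A) : M.le (M.odot (M.oplus u v) (M.star u)) v := by
  show M.oplus (M.star (M.odot (M.oplus u v) (M.star u))) v = M.one
  rw [star_odot, M.star_star, M.oplus_assoc]
  exact star_oplus_self _

lemma le_star_oplus_odot (a b : A) : M.le a (M.oplus (M.star b) (M.odot a b)) := by
  show M.oplus (M.star a) (M.oplus (M.star b) (M.odot a b)) = M.one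
  rw [← M.oplus_assoc]
  exact oplus_star_self _

lemma odot_le_iff {a b c : A} : M.le (M.odot a b) c ↔ M.le a (M.oplus (M.star b) c) := by
  refine ⟨fun h => le_trans (le_star_oplus_odot a b) (oplus_le_oplus (le_refl _) h),
    fun h => le_trans (odot_le_odot_right b h) ?_⟩
  simpa only [M.star_star] using odot_star_le (M := M) (M.star b) c

lemma le_oplus_iff {a b c : A} : M.le c (M.oplus a b) ↔ M.le (M.msub c b) a := by
  rw [msub_eq_odot]
  refine ⟨fun h => le_trans (odot_le_odot_right (M.star b) h) ?_, fun h => ?_⟩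
  · rw [M.oplus_comm]; exact odot_star_le b a
  · have h₁ := le_vee_left (M := M) c b
    rw [vee, msub_eq_odot] at h₁
    exact le_trans h₁ (oplus_le_oplus_right b h)

lemma vee_le {a b c : A} (h₁ : M.le a c) (h₂ : M.le b c) : M.le (M.vee a b) c := by
  have h := oplus_le_oplus_right b (odot_le_odot_right (M.star b) h₁)
  rwa [← msub_eq_odot, ← msub_eq_odot, ← vee_def, ← vee_def, vee_comm c, vee_eq_right h₂]
    at h

lemma wedge_le_left (a b : A) : M.le (M.wedge a b) a := by
  simpa only [wedge, M.star_star] using star_le_star (le_vee_left (M := M) (M.star a) (M.star b))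

lemma wedge_le_right (a b : A) : M.le (M.wedge a b) b := by
  simpa only [wedge, M.star_star] using star_le_star (le_vee_right (M := M) (M.star a) (M.star b))

lemma le_wedge {a b c : A} (h₁ : M.le c a) (h₂ : M.le c b) : M.le c (M.wedge a b) := by
  simpa only [wedge, M.star_star] using
    star_le_star (vee_le (star_le_star h₁) (star_le_star h₂))

lemma wedge_eq_left {a b : A} (h : M.le a b) : M.wedge a b = a :=
  le_antisymm (wedge_le_left a b) (le_wedge (le_refl a) h)

lemma wedge_comm (a b : A) : M.wedge a b = M.wedge b a := by
  rw [wedge, wedge, vee_comm]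

lemma wedge_eq_odot (a b : A) : M.wedge a b = M.odot (M.oplus a (M.star b)) b := by
  simp only [wedge, vee_def, msub, odot, M.star_star]

lemma le_odot_of_le {c p q : A} (h₁ : M.le c q) (h₂ : M.le (M.oplus c (M.star q)) p) :
    M.le c (M.odot p q) := by
  simpa only [← wedge_eq_odot, wedge_eq_left h₁] using odot_le_odot_right q h₂

lemma oplus_odot_star_cancel {a b : A} (h : M.le b (M.star a)) :
    M.odot (M.oplus a b) (M.star a) = b := by
  refine le_antisymm (odot_star_le a b) (le_odot_of_le h ?_)
  rw [M.star_star, M.oplus_comm]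
  exact le_refl _

lemma oplus_odot_le (p q r : A) : M.le (M.odot (M.oplus p q) r) (M.oplus p (M.odot q r)) := by
  rw [odot_le_iff, oplus_left_comm (M := M) (M.star r) p]
  exact oplus_le_oplus (le_refl p) (le_star_oplus_odot q r)

/-- Riesz decomposition. -/
lemma le_oplus_wedge {c z w : A} (h : M.le c (M.oplus z w)) :
    M.le c (M.oplus (M.wedge z c) (M.wedge w c)) := by
  have h₁ : M.le c (M.oplus (M.wedge z c) w) :=
    le_oplus_iff.mpr (le_wedge (le_oplus_iff.mp h) (msub_le c w))
  rw [M.oplus_comm] at h₁ ⊢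
  exact le_oplus_iff.mpr (le_wedge (le_oplus_iff.mp h₁) (msub_le c _))

lemma wedge_oplus_le (z w a : A) :
    M.le (M.wedge (M.oplus z w) a) (M.oplus (M.wedge z a) (M.wedge w a)) := by
  have ha := wedge_le_right (M := M) (M.oplus z w) a
  refine le_trans (le_oplus_wedge (wedge_le_left _ _)) (oplus_le_oplus ?_ ?_) <;>
    exact le_wedge (wedge_le_left _ _) (le_trans (wedge_le_right _ _) ha)

lemma odot_vee (p q r : A) : M.odot p (M.vee q r) = M.vee (M.odot p q) (M.odot p r) := by
  refine le_antisymm ?_ (vee_le (odot_le_odot (le_refl p) (le_vee_left q r))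
    (odot_le_odot (le_refl p) (le_vee_right q r)))
  rw [odot_comm, odot_le_iff]
  refine vee_le (le_trans (le_star_oplus_odot q p) (oplus_le_oplus (le_refl _) ?_))
    (le_trans (le_star_oplus_odot r p) (oplus_le_oplus (le_refl _) ?_))
  · rw [odot_comm q p]; exact le_vee_left _ _
  · rw [odot_comm r p]; exact le_vee_right _ _

lemma star_vee_oplus (a b : A) : M.oplus (M.star (M.vee a b)) b = M.oplus (M.star a) b := by
  refine le_antisymm (oplus_le_oplus_right b (star_le_star (le_vee_left a b))) ?_
  refine odot_le_iff.mp ?_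
  rw [odot_vee]
  exact vee_le (odot_le_iff.mpr (le_refl _)) (odot_le_right _ _)

/-- Prelinearity: `(x → y) ∨ (y → x) = 1`, where `x → y = x* ⊕ y`. -/
lemma vee_imp_imp (x y : A) :
    M.vee (M.oplus (M.star x) y) (M.oplus (M.star y) x) = M.one := by
  have hy : M.oplus (M.star (M.vee x y)) y = M.oplus (M.star x) y := star_vee_oplus x y
  have hx : M.oplus (M.star (M.vee x y)) x = M.oplus (M.star y) x := by
    rw [vee_comm]; exact star_vee_oplus y x
  have key : M.oplus (M.star (M.oplus (M.star x) y)) (M.oplus (M.star y) x)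
      = M.oplus (M.star y) x := by
    rw [← hy, ← hx, ← M.oplus_assoc, ← star_odot, M.oplus_comm (M.star _) y,
      ← wedge_eq_odot,      wedge_eq_left (le_vee_right x y), hx]
  show M.oplus (M.star (M.oplus (M.star _) _)) _ = M.one
  rw [key]
  exact star_oplus_self _

lemma msub_wedge_msub (x y : A) : M.wedge (M.msub x y) (M.msub y x) = M.zero := by
  simp only [wedge, msub, M.star_star]
  rw [vee_imp_imp, star_one]

lemma nsmul_succ (n : ℕ) (a : A) : M.nsmul (n + 1) a = M.oplus a (M.nsmul n a) := rfl

lemma nsmul_zero (n : ℕ) : M.nsmul n M.zero = M.zero := by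
  induction n with
  | zero => rfl
  | succ k ih => rw [nsmul_succ, ih, M.oplus_zero]

lemma one_nsmul (a : A) : M.nsmul 1 a = a := M.oplus_zero a

lemma add_nsmul (m n : ℕ) (a : A) :
    M.nsmul (m + n) a = M.oplus (M.nsmul m a) (M.nsmul n a) := by
  induction m with
  | zero => rw [Nat.zero_add]; exact (zero_oplus _).symm
  | succ k ih => rw [Nat.succ_add, nsmul_succ, ih, nsmul_succ, M.oplus_assoc]

lemma nsmul_nsmul (m k : ℕ) (a : A) : M.nsmul m (M.nsmul k a) = M.nsmul (m * k) a := by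
  induction m with
  | zero => rw [Nat.zero_mul]; rfl
  | succ j ih => rw [nsmul_succ, ih, Nat.succ_mul, Nat.add_comm, add_nsmul]

lemma nsmul_eq_one_of_le {m n : ℕ} {a : A} (h : M.nsmul m a = M.one) (hmn : m ≤ n) :
    M.nsmul n a = M.one := by
  obtain ⟨k, rfl⟩ := Nat.exists_eq_add_of_le hmn
  rw [add_nsmul, h]
  exact one_oplus _

lemma wedge_nsmul_left {a b : A} (h : M.wedge a b = M.zero) (n : ℕ) :
    M.wedge (M.nsmul n a) b = M.zero := by
  induction n with
  | zero => exact wedge_eq_left (zero_le b)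
  | succ k ih =>
    refine eq_zero_of_le_zero ?_
    simpa only [nsmul_succ, h, ih, M.oplus_zero] using wedge_oplus_le (M := M) a (M.nsmul k a) b

lemma wedge_nsmul_nsmul {a b : A} (h : M.wedge a b = M.zero) (m n : ℕ) :
    M.wedge (M.nsmul m a) (M.nsmul n b) = M.zero := by
  have h' := wedge_nsmul_left h m
  rw [wedge_comm] at h' ⊢
  exact wedge_nsmul_left h' n

variable (M) in
/-- Simplicity, in its usual elementwise form. -/
def IsSimple : Prop := M.zero ≠ M.one ∧ ∀ a, a ≠ M.zero → ∃ n, M.nsmul n a = M.one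

lemma IsSimple.le_total (hM : M.IsSimple) (x y : A) : M.le x y ∨ M.le y x := by
  by_contra! hne
  obtain ⟨m, hm⟩ := hM.2 _ (mt le_iff_msub_eq_zero.mpr hne.1)
  obtain ⟨n, hn⟩ := hM.2 _ (mt le_iff_msub_eq_zero.mpr hne.2)
  have h := wedge_nsmul_nsmul (msub_wedge_msub (M := M) x y) (max m n) (max m n)
  rw [nsmul_eq_one_of_le hm (le_max_left m n), nsmul_eq_one_of_le hn (le_max_right m n),
    wedge_eq_left (le_refl _)] at h
  exact hM.1 h.symm

lemma msub_star_star (a b : A) : M.msub (M.star a) (M.star b) = M.msub b a := by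
  simp only [msub, M.star_star, M.oplus_comm]

/-- Below `1/2` doubling commutes with truncated differences. -/
lemma msub_oplus_self {x y : A} (hxy : M.le x y) (hy : M.odot y y = M.zero) :
    M.msub (M.oplus y y) (M.oplus x x) = M.oplus (M.msub y x) (M.msub y x) := by
  set u := M.msub y x
  have hyu : M.oplus x u = y := oplus_msub_of_le hxy
  have hxu : M.odot x u = M.zero := by
    rw [show u = M.odot y (M.star x) from msub_eq_odot y x, odot_comm y, ← odot_assoc,
      odot_star_self, zero_odot]
  have hy' : M.le y (M.star y) := le_iff_odot_star_eq_zero.mpr (by rwa [M.star_star])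
  have hx' : M.le x (M.star u) := le_iff_odot_star_eq_zero.mpr (by rwa [M.star_star])
  have huy : M.le (M.oplus u y) (M.star x) := by
    have h : M.le x (M.odot (M.star y) (M.star u)) :=
      le_odot_of_le hx' (by rwa [M.star_star, hyu])
    simpa only [← star_oplus, M.star_star, M.oplus_comm y] using star_le_star h
  have huu : M.le (M.oplus u u) (M.star (M.oplus x x)) := by
    rw [star_oplus]
    refine le_odot_of_le (le_trans (oplus_le_oplus (le_refl u) (msub_le y x)) huy) ?_
    rwa [M.star_star, M.oplus_assoc, M.oplus_comm u x, hyu]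
  have h2y : M.oplus y y = M.oplus (M.oplus x x) (M.oplus u u) := by
    rw [← hyu, M.oplus_assoc, oplus_left_comm u x u, ← M.oplus_assoc]
  rw [msub_eq_odot, h2y]
  exact oplus_odot_star_cancel huu

lemma msub_odot_self {x y : A} (hxy : M.le x y) (hx : M.oplus x x = M.one) :
    M.msub (M.odot y y) (M.odot x x) = M.oplus (M.msub y x) (M.msub y x) := by
  have hx' : M.odot (M.star x) (M.star x) = M.zero := by rw [← star_oplus, hx, star_one]
  have h := msub_oplus_self (star_le_star hxy) hx'
  rwa [msub_star_star, ← msub_star_star, ← star_odot, ← star_odot, M.star_star,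
    M.star_star] at h

variable (M) in
def doubleBy : Bool → A → A
  | true, z => M.oplus z z
  | false, z => M.odot z z

variable (M) in
/-- Reading a word of doublings, `z` is tracked through a binary expansion of its value. -/
def doubleList : List Bool → A → A
  | [], z => z
  | b :: s, z => doubleList s (M.doubleBy b z)

lemma IsSimple.exists_separating_word (hM : M.IsSimple) (N : ℕ) {x y : A}
    (h : M.nsmul (2 ^ N) (M.msub y x) = M.one) :
    ∃ s, M.doubleList s x = M.zero ∧ M.doubleList s y ≠ M.zero := by
  induction N generalizing x y with
  | zero =>
    rw [pow_zero, one_nsmul] at h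
    have hy : y = M.one := le_antisymm (le_one y) (h ▸ msub_le y x)
    have hx : M.star x = M.one := le_antisymm (le_one _) (h ▸ msub_le_star y x)
    refine ⟨[], star_injective (M := M) hx, ?_⟩
    rw [doubleList, hy]
    exact hM.1.symm
  | succ k ih =>
    have hxy : M.le x y := (hM.le_total x y).resolve_right fun hyx => hM.1 <| by
      rw [← h, le_iff_msub_eq_zero.mp hyx, nsmul_zero]
    have h2 : M.nsmul (2 ^ k) (M.oplus (M.msub y x) (M.msub y x)) = M.one := by
      rwa [← one_nsmul (M.msub y x), ← add_nsmul, nsmul_nsmul, ← pow_succ]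
    rcases hM.le_total x (M.star x) with hx | hx
    · have hxx : M.odot x x = M.zero := by
        simpa only [M.star_star] using le_iff_odot_star_eq_zero.mp hx
      by_cases hyy : M.odot y y = M.zero
      · obtain ⟨s, hs⟩ := ih (by rwa [msub_oplus_self hxy hyy])
        exact ⟨true :: s, hs⟩
      · exact ⟨[false], hxx, hyy⟩
    · have hxx : M.oplus x x = M.one :=
        le_antisymm (le_one _) (star_oplus_self x ▸ oplus_le_oplus_right x hx)
      obtain ⟨s, hs⟩ := ih (by rwa [msub_odot_self hxy hxx])
      exact ⟨false :: s, hs⟩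

lemma IsSimple.injective_zeroWords (hM : M.IsSimple) :
    Function.Injective fun a : A => {s : List Bool | M.doubleList s a = M.zero} := by
  have key : ∀ {a b : A}, M.le a b → a ≠ b →
      ∃ s, M.doubleList s a = M.zero ∧ M.doubleList s b ≠ M.zero := by
    intro a b hab hne
    obtain ⟨n, hn⟩ := hM.2 _ (mt le_iff_msub_eq_zero.mpr fun h => hne (le_antisymm hab h))
    exact hM.exists_separating_word n (nsmul_eq_one_of_le hn Nat.lt_two_pow_self.le)
  intro a b h
  by_contra hne
  rcases hM.le_total a b with hab | hba
  · obtain ⟨s, hs, hs'⟩ := key hab hne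
    exact hs' ((Set.ext_iff.mp h s).mp hs)
  · obtain ⟨s, hs, hs'⟩ := key hba (Ne.symm hne)
    exact hs' ((Set.ext_iff.mp h s).mpr hs)

lemma IsIdeal.nsmul_mem {I : Set A} (hI : M.IsIdeal I) {a : A} (ha : a ∈ I) (n : ℕ) :
    M.nsmul n a ∈ I := by
  induction n with
  | zero => exact hI.1
  | succ k ih => exact hI.2.1 a ha _ ih

lemma IsIdeal.one_mem_iff {I : Set A} (hI : M.IsIdeal I) : M.one ∈ I ↔ I = Set.univ :=
  ⟨fun h => Set.eq_univ_of_forall fun z => hI.2.2 z M.one (le_one z) h, fun h => h ▸ trivial⟩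

lemma IsMaximalIdeal.one_notMem {I : Set A} (hI : M.IsMaximalIdeal I) : M.one ∉ I :=
  fun h => hI.2.1 (hI.1.one_mem_iff.mp h)

/-- The ideal generated by `I` and `a ∉ I` is everything, so `1 ≤ i ⊕ n·a` with `i ∈ I`. -/
lemma IsMaximalIdeal.exists_star_nsmul_mem {I : Set A} (hI : M.IsMaximalIdeal I) {a : A}
    (ha : a ∉ I) : ∃ n, M.star (M.nsmul n a) ∈ I := by
  set U : Set A := {z | ∃ i ∈ I, ∃ n, M.le z (M.oplus i (M.nsmul n a))}
  have hU : M.IsIdeal U := by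
    refine ⟨⟨M.zero, hI.1.1, 0, zero_le _⟩, ?_, ?_⟩
    · rintro z ⟨i, hi, m, hz⟩ w ⟨j, hj, n, hw⟩
      refine ⟨M.oplus i j, hI.1.2.1 i hi j hj, m + n, ?_⟩
      rw [add_nsmul, M.oplus_assoc, oplus_left_comm j, ← M.oplus_assoc i]
      exact oplus_le_oplus hz hw
    · rintro z w hzw ⟨i, hi, n, hw⟩
      exact ⟨i, hi, n, le_trans hzw hw⟩
  have hIU : I ⊆ U := fun z hz => ⟨z, hz, 0, le_oplus_right z _⟩
  have haU : a ∈ U := ⟨M.zero, hI.1.1, 1, by rw [one_nsmul, zero_oplus]; exact le_refl a⟩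
  have hUuniv : U = Set.univ := by
    by_contra hne
    exact ha (hI.2.2 U hU hne hIU ▸ haU)
  obtain ⟨i, hi, n, h1⟩ : M.one ∈ U := hUuniv ▸ trivial
  refine ⟨n, hI.1.2.2 _ i ?_ hi⟩
  show M.oplus (M.star (M.star (M.nsmul n a))) i = M.one
  rw [M.star_star, M.oplus_comm]
  exact le_antisymm (le_one _) h1

lemma semisimple_iff :
    M.Semisimple ↔ ∀ a, (∀ I, M.IsMaximalIdeal I → a ∈ I) → a = M.zero := by
  refine ⟨fun h a ha => (Set.ext_iff.mp h a).mp ha, fun h => Set.ext fun a => ?_⟩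
  exact ⟨h a, fun ha I hI => (Set.mem_singleton_iff.mp ha) ▸ hI.1.1⟩

lemma IsSimple.semisimple (hM : M.IsSimple) : M.Semisimple := by
  have hmax : M.IsMaximalIdeal {M.zero} := by
    refine ⟨⟨rfl, fun a ha b hb => ?_, fun a b hab hb => ?_⟩, fun h => ?_,
      fun J hJ hJu h0 => ?_⟩
    · rw [ha, hb, Set.mem_singleton_iff, M.oplus_zero]
    · exact eq_zero_of_le_zero (hb ▸ hab)
    · exact hM.1 (h ▸ Set.mem_univ M.one : M.one ∈ ({M.zero} : Set A)).symm
    · refine Set.Subset.antisymm (fun a ha => by_contra fun ha0 => hJu ?_) h0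
      obtain ⟨n, hn⟩ := hM.2 a ha0
      exact hJ.one_mem_iff.mp (hn ▸ hJ.nsmul_mem ha n)
  exact semisimple_iff.mpr fun a ha => ha _ hmax

end MVAlg

namespace MVHom

variable {A B C : Type*} {M : MVAlg A} {N : MVAlg B} {O : MVAlg C} {f : A → B}

lemma comp {g : B → C} (hf : MVHom M N f) (hg : MVHom N O g) : MVHom M O (g ∘ f) :=
  ⟨fun x y => by simp only [Function.comp, hf.1, hg.1],
    fun x => by simp only [Function.comp, hf.2.1, hg.2.1],
    by simp only [Function.comp, hf.2.2, hg.2.2]⟩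

lemma map_one (hf : MVHom M N f) : f M.one = N.one := by
  rw [MVAlg.one, hf.2.1, hf.2.2]; rfl

lemma map_le (hf : MVHom M N f) {a b : A} (h : M.le a b) : N.le (f a) (f b) := by
  show N.oplus (N.star (f a)) (f b) = N.one
  rw [← hf.2.1, ← hf.1, ← hf.map_one]
  exact congrArg f h

lemma map_nsmul (hf : MVHom M N f) (n : ℕ) (a : A) : f (M.nsmul n a) = N.nsmul n (f a) := by
  induction n with
  | zero => exact hf.2.2
  | succ k ih => rw [MVAlg.nsmul_succ, hf.1, ih]; rfl

lemma isMaximalIdeal_preimage (hf : MVHom M N f) {I : Set B} (hI : N.IsMaximalIdeal I) :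
    M.IsMaximalIdeal (f ⁻¹' I) := by
  refine ⟨⟨?_, fun a ha b hb => ?_, fun a b hab hb => hI.1.2.2 _ _ (hf.map_le hab) hb⟩,
    fun h => hI.one_notMem ?_, fun J hJ hJu hIJ => ?_⟩
  · show f M.zero ∈ I
    rw [hf.2.2]; exact hI.1.1
  · show f (M.oplus a b) ∈ I
    rw [hf.1]; exact hI.1.2.1 _ ha _ hb
  · rw [← hf.map_one]; exact (h ▸ Set.mem_univ M.one : M.one ∈ f ⁻¹' I)
  · refine Set.Subset.antisymm (fun b hb => by_contra fun hbI => hJu ?_) hIJ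
    obtain ⟨n, hn⟩ := hI.exists_star_nsmul_mem hbI
    have hn' : M.star (M.nsmul n b) ∈ J :=
      hIJ (show f (M.star (M.nsmul n b)) ∈ I by rwa [hf.2.1, hf.map_nsmul])
    refine hJ.one_mem_iff.mp ?_
    rw [← MVAlg.oplus_star_self (M.nsmul n b)]
    exact hJ.2.1 _ (hJ.nsmul_mem hb n) _ hn'

lemma semisimple (hf : MVHom M N f) (hinj : Function.Injective f) (hN : N.Semisimple) :
    M.Semisimple :=
  MVAlg.semisimple_iff.mpr fun a ha => hinj <| by
    rw [hf.2.2]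
    exact MVAlg.semisimple_iff.mp hN _ fun I hI => ha _ (hf.isMaximalIdeal_preimage hI)

end MVHom

namespace PMVHom

variable {A B C : Type*} {P : PMVAlg A} {Q : PMVAlg B} {R : PMVAlg C} {f : A → B}

lemma comp {g : B → C} (hf : PMVHom P Q f) (hg : PMVHom Q R g) : PMVHom P R (g ∘ f) :=
  ⟨hf.1.comp hg.1, fun x y => by simp only [Function.comp, hf.2, hg.2]⟩

end PMVHom

namespace MVAlg

variable {A : Type*} (M : MVAlg A)

/-- Congruences of `M` are the relations `dist a b ∈ I`, `I` an ideal. -/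
def dist (a b : A) : A := M.oplus (M.msub a b) (M.msub b a)

variable {M}

lemma msub_self (a : A) : M.msub a a = M.zero := le_iff_msub_eq_zero.mp (le_refl a)

lemma msub_zero (a : A) : M.msub a M.zero = a := by
  simp only [msub, M.oplus_zero, M.star_star]

lemma zero_msub (a : A) : M.msub M.zero a = M.zero := le_iff_msub_eq_zero.mp (zero_le a)

lemma msub_le_oplus_msub (a b c : A) :
    M.le (M.msub a c) (M.oplus (M.msub a b) (M.msub b c)) := by
  have h := odot_le_odot_right (M.star c) (le_vee_left (M := M) a b)
  rw [vee_def, ← msub_eq_odot] at h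
  rw [msub_eq_odot b c]
  exact le_trans h (oplus_odot_le _ _ _)

lemma msub_oplus_oplus_le (a b c : A) :
    M.le (M.msub (M.oplus a c) (M.oplus b c)) (M.msub a b) := by
  have h : M.le (M.oplus a c) (M.oplus (M.msub a b) (M.oplus b c)) := by
    rw [← M.oplus_assoc, ← vee_def]
    exact oplus_le_oplus_right c (le_vee_left a b)
  exact le_oplus_iff.mp h

lemma dist_comm (a b : A) : M.dist a b = M.dist b a := M.oplus_comm _ _

lemma dist_self (a : A) : M.dist a a = M.zero := by
  rw [dist, msub_self, M.oplus_zero]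

lemma dist_zero_right (a : A) : M.dist a M.zero = a := by
  rw [dist, msub_zero, zero_msub, M.oplus_zero]

lemma dist_one_right (a : A) : M.dist a M.one = M.star a := by
  simp only [dist, msub, oplus_one', star_one, zero_oplus]

lemma dist_le_oplus_dist (a b c : A) :
    M.le (M.dist a c) (M.oplus (M.dist a b) (M.dist b c)) := by
  refine le_trans (oplus_le_oplus (msub_le_oplus_msub a b c) (msub_le_oplus_msub c b a)) ?_
  simp only [dist, M.oplus_assoc, oplus_left_comm (M.msub b c),
    M.oplus_comm (M.msub c b) (M.msub b a)]
  exact le_refl _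

lemma dist_oplus_le (a b c : A) : M.le (M.dist (M.oplus a c) (M.oplus b c)) (M.dist a b) :=
  oplus_le_oplus (msub_oplus_oplus_le a b c) (msub_oplus_oplus_le b a c)

lemma dist_star_star (a b : A) : M.dist (M.star a) (M.star b) = M.dist a b := by
  rw [dist, msub_star_star, msub_star_star, dist_comm]; rfl

lemma eq_of_dist_eq_zero {a b : A} (h : M.dist a b = M.zero) : a = b := by
  have h₁ := le_oplus_right (M := M) (M.msub a b) (M.msub b a)
  have h₂ := le_oplus_left (M := M) (M.msub b a) (M.msub a b)
  rw [show M.oplus _ _ = M.dist a b from rfl, h] at h₁ h₂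
  exact le_antisymm (le_iff_msub_eq_zero.mpr (eq_zero_of_le_zero h₁))
    (le_iff_msub_eq_zero.mpr (eq_zero_of_le_zero h₂))

lemma vee_zero_left (a : A) : M.vee M.zero a = a := by
  show M.oplus (M.star (M.oplus (M.star M.zero) a)) a = a
  rw [show M.oplus (M.star M.zero) a = M.one from one_oplus a, star_one, zero_oplus]

lemma msub_wedge_star (b c : A) : M.msub b (M.wedge b (M.star c)) = M.odot b c := by
  rw [msub_eq_odot, wedge, M.star_star, M.star_star, odot_vee, odot_star_self, vee_zero_left]

end MVAlg

namespace PMVAlg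

open MVAlg

variable {B : Type*} (P : PMVAlg B)

lemma mul_le_mul_left {u v : B} (a : B) (h : P.toMVAlg.le u v) :
    P.toMVAlg.le (P.mul a u) (P.mul a v) := by
  rw [← oplus_msub_of_le h, P.mul_linear_right a u _ (le_star_msub v u)]
  exact le_oplus_right _ _

lemma mul_le_mul_right {u v : B} (c : B) (h : P.toMVAlg.le u v) :
    P.toMVAlg.le (P.mul u c) (P.mul v c) := by
  rw [P.mul_comm u, P.mul_comm v]
  exact P.mul_le_mul_left c h

lemma mul_le_left (a c : B) : P.toMVAlg.le (P.mul a c) a := by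
  simpa only [P.mul_one] using P.mul_le_mul_left a (le_one c)

lemma msub_mul_le (a b c : B) :
    P.toMVAlg.le (P.toMVAlg.msub (P.mul a c) (P.mul b c)) (P.toMVAlg.msub a b) := by
  set w := P.toMVAlg.msub a b
  have h : P.toMVAlg.le (P.mul a c) (P.toMVAlg.oplus (P.mul w c) (P.mul b c)) := by
    rw [← P.mul_linear_left w b c (msub_le_star a b), ← vee_def]
    exact P.mul_le_mul_right c (le_vee_left a b)
  exact le_trans (le_oplus_iff.mp h) (P.mul_le_left w c)

lemma dist_mul_le (a b c : B) :
    P.toMVAlg.le (P.toMVAlg.dist (P.mul a c) (P.mul b c)) (P.toMVAlg.dist a b) :=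
  oplus_le_oplus (P.msub_mul_le a b c) (P.msub_mul_le b a c)

variable {I : Set B} (hI : P.toMVAlg.IsIdeal I)

def congr : Setoid B where
  r a b := P.toMVAlg.dist a b ∈ I
  iseqv :=
    { refl := fun a => show P.toMVAlg.dist a a ∈ I by rw [dist_self]; exact hI.1
      symm := fun {a b} h => show P.toMVAlg.dist b a ∈ I by rwa [dist_comm]
      trans := fun h₁ h₂ => hI.2.2 _ _ (dist_le_oplus_dist _ _ _) (hI.2.1 _ h₁ _ h₂) }

variable {P hI}

lemma congr_iff {a b : B} : P.congr hI a b ↔ P.toMVAlg.dist a b ∈ I := Iff.rfl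

lemma congr_oplus {a b c d : B} (h₁ : P.congr hI a b) (h₂ : P.congr hI c d) :
    P.congr hI (P.toMVAlg.oplus a c) (P.toMVAlg.oplus b d) := by
  refine (P.congr hI).trans (hI.2.2 _ _ (dist_oplus_le a b c) h₁) ?_
  rw [P.toMVAlg.oplus_comm b, P.toMVAlg.oplus_comm b]
  exact hI.2.2 _ _ (dist_oplus_le c d b) h₂

lemma congr_star {a b : B} (h : P.congr hI a b) :
    P.congr hI (P.toMVAlg.star a) (P.toMVAlg.star b) := by
  rwa [congr_iff, dist_star_star]

lemma congr_mul {a b c d : B} (h₁ : P.congr hI a b) (h₂ : P.congr hI c d) :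
    P.congr hI (P.mul a c) (P.mul b d) := by
  refine (P.congr hI).trans (hI.2.2 _ _ (P.dist_mul_le a b c) h₁) ?_
  rw [P.mul_comm b, P.mul_comm b]
  exact hI.2.2 _ _ (P.dist_mul_le c d b) h₂

/-- Linearity modulo `I`: replacing `b` by `b ∧ c*` changes it only by `b ⊙ c ∈ I`. -/
lemma congr_mul_oplus {b c : B} (a : B) (h : P.toMVAlg.odot b c ∈ I) :
    P.congr hI (P.mul a (P.toMVAlg.oplus b c))
      (P.toMVAlg.oplus (P.mul a b) (P.mul a c)) := by
  set b' := P.toMVAlg.wedge b (P.toMVAlg.star c)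
  have hb : P.congr hI b' b := by
    rw [congr_iff, MVAlg.dist, le_iff_msub_eq_zero.mp (wedge_le_left _ _), zero_oplus,
      msub_wedge_star]
    exact h
  have hl := P.mul_linear_right a b' c (wedge_le_right _ _)
  refine (P.congr hI).trans (congr_mul ((P.congr hI).refl a)
    (congr_oplus ((P.congr hI).symm hb) ((P.congr hI).refl c))) ?_
  rw [hl]
  exact congr_oplus (congr_mul ((P.congr hI).refl a) hb) ((P.congr hI).refl _)

lemma odot_mem_of_congr {b c : B}
    (h : P.congr hI (P.toMVAlg.oplus (P.toMVAlg.star b) (P.toMVAlg.star c)) P.toMVAlg.one) :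
    P.toMVAlg.odot b c ∈ I := by
  rwa [congr_iff, dist_one_right] at h

end PMVAlg

namespace PMVAlg

open MVAlg

variable {B : Type*} {P : PMVAlg B} {I : Set B}

variable (hI : P.toMVAlg.IsIdeal I) in
def quot : PMVAlg (Quotient (P.congr hI)) where
  oplus := Quotient.map₂ P.toMVAlg.oplus fun _ _ h₁ _ _ h₂ => congr_oplus h₁ h₂
  star := Quotient.map P.toMVAlg.star fun _ _ h => congr_star h
  zero := Quotient.mk _ P.toMVAlg.zero
  oplus_comm := by
    rintro ⟨a⟩ ⟨b⟩; exact congrArg (Quotient.mk _) (P.toMVAlg.oplus_comm a b)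
  oplus_assoc := by
    rintro ⟨a⟩ ⟨b⟩ ⟨c⟩; exact congrArg (Quotient.mk _) (P.toMVAlg.oplus_assoc a b c)
  oplus_zero := by
    rintro ⟨a⟩; exact congrArg (Quotient.mk _) (P.toMVAlg.oplus_zero a)
  star_star := by
    rintro ⟨a⟩; exact congrArg (Quotient.mk _) (P.toMVAlg.star_star a)
  oplus_one := by
    rintro ⟨a⟩; exact congrArg (Quotient.mk _) (P.toMVAlg.oplus_one a)
  luk := by
    rintro ⟨a⟩ ⟨b⟩; exact congrArg (Quotient.mk _) (P.toMVAlg.luk a b)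
  mul := Quotient.map₂ P.mul fun _ _ h₁ _ _ h₂ => congr_mul h₁ h₂
  mul_assoc := by
    rintro ⟨a⟩ ⟨b⟩ ⟨c⟩; exact congrArg (Quotient.mk _) (P.mul_assoc a b c)
  mul_comm := by
    rintro ⟨a⟩ ⟨b⟩; exact congrArg (Quotient.mk _) (P.mul_comm a b)
  mul_one := by
    rintro ⟨a⟩; exact congrArg (Quotient.mk _) (P.mul_one a)
  mul_linear_right := by
    rintro ⟨a⟩ ⟨b⟩ ⟨c⟩ h
    exact Quotient.sound (congr_mul_oplus a (odot_mem_of_congr (Quotient.exact h)))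
  mul_linear_left := by
    rintro ⟨a⟩ ⟨b⟩ ⟨c⟩ h
    refine Quotient.sound ?_
    rw [P.mul_comm, P.mul_comm a, P.mul_comm b]
    exact congr_mul_oplus c (odot_mem_of_congr (Quotient.exact h))

lemma pmvHom_mk (hI : P.toMVAlg.IsIdeal I) :
    PMVHom P (quot hI) (Quotient.mk (P.congr hI)) :=
  ⟨⟨fun _ _ => rfl, fun _ => rfl, rfl⟩, fun _ _ => rfl⟩

lemma mk_eq_zero_iff (hI : P.toMVAlg.IsIdeal I) {a : B} :
    Quotient.mk (P.congr hI) a = (quot hI).toMVAlg.zero ↔ a ∈ I := by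
  rw [show (quot hI).toMVAlg.zero = Quotient.mk _ P.toMVAlg.zero from rfl, Quotient.eq,
    congr_iff, dist_zero_right]

lemma isSimple_quot (hI : P.toMVAlg.IsMaximalIdeal I) : (quot hI.1).toMVAlg.IsSimple := by
  refine ⟨fun h => hI.one_notMem ((mk_eq_zero_iff hI.1).mp h.symm), ?_⟩
  intro q ha
  obtain ⟨a, rfl⟩ := Quotient.exists_rep q
  obtain ⟨n, hn⟩ := hI.exists_star_nsmul_mem fun h => ha ((mk_eq_zero_iff hI.1).mpr h)
  refine ⟨n, star_injective (M := (quot hI.1).toMVAlg) ?_⟩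
  rw [MVAlg.star_one, ← (pmvHom_mk hI.1).1.map_nsmul, ← (pmvHom_mk hI.1).1.2.1]
  exact (mk_eq_zero_iff hI.1).mpr hn

lemma Semisimple.exists_mk_ne (hP : P.Semisimple) {a b : B} (hab : a ≠ b) :
    ∃ I, ∃ hI : P.toMVAlg.IsMaximalIdeal I,
      Quotient.mk (P.congr hI.1) a ≠ Quotient.mk (P.congr hI.1) b := by
  by_contra! h
  exact hab (eq_of_dist_eq_zero (semisimple_iff.mp hP _ fun I hI => Quotient.exact (h I hI)))

end PMVAlg

namespace PMVAlg

variable {B : Type*} (P : PMVAlg B)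

structure Subalgebra where
  carrier : Set B
  zero_mem : P.toMVAlg.zero ∈ carrier
  oplus_mem : ∀ {a b : B}, a ∈ carrier → b ∈ carrier → P.toMVAlg.oplus a b ∈ carrier
  star_mem : ∀ {a : B}, a ∈ carrier → P.toMVAlg.star a ∈ carrier
  mul_mem : ∀ {a b : B}, a ∈ carrier → b ∈ carrier → P.mul a b ∈ carrier

variable {P}

def Subalgebra.toPMVAlg (S : P.Subalgebra) : PMVAlg S.carrier where
  oplus a b := ⟨P.toMVAlg.oplus a b, S.oplus_mem a.2 b.2⟩
  star a := ⟨P.toMVAlg.star a, S.star_mem a.2⟩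
  zero := ⟨P.toMVAlg.zero, S.zero_mem⟩
  oplus_comm _ _ := Subtype.ext (P.toMVAlg.oplus_comm _ _)
  oplus_assoc _ _ _ := Subtype.ext (P.toMVAlg.oplus_assoc _ _ _)
  oplus_zero _ := Subtype.ext (P.toMVAlg.oplus_zero _)
  star_star _ := Subtype.ext (P.toMVAlg.star_star _)
  oplus_one _ := Subtype.ext (P.toMVAlg.oplus_one _)
  luk _ _ := Subtype.ext (P.toMVAlg.luk _ _)
  mul a b := ⟨P.mul a b, S.mul_mem a.2 b.2⟩
  mul_assoc _ _ _ := Subtype.ext (P.mul_assoc _ _ _)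
  mul_comm _ _ := Subtype.ext (P.mul_comm _ _)
  mul_one _ := Subtype.ext (P.mul_one _)
  mul_linear_right x y z h := Subtype.ext (P.mul_linear_right x y z (congrArg Subtype.val h))
  mul_linear_left x y z h := Subtype.ext (P.mul_linear_left x y z (congrArg Subtype.val h))

lemma Subalgebra.pmvHom_val (S : P.Subalgebra) : PMVHom S.toPMVAlg P Subtype.val :=
  ⟨⟨fun _ _ => rfl, fun _ => rfl, rfl⟩, fun _ _ => rfl⟩

end PMVAlg

inductive PMVTerm (n : ℕ) : Type
  | zero : PMVTerm n
  | var (i : Fin n) : PMVTerm n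
  | oplus (s t : PMVTerm n) : PMVTerm n
  | star (s : PMVTerm n) : PMVTerm n
  | mul (s t : PMVTerm n) : PMVTerm n
  deriving Countable

namespace PMVTerm

variable {n : ℕ} {B : Type*} (P : PMVAlg B) (p : Fin n → B)

def eval : PMVTerm n → B
  | zero => P.toMVAlg.zero
  | var i => p i
  | oplus s t => P.toMVAlg.oplus (eval s) (eval t)
  | star s => P.toMVAlg.star (eval s)
  | mul s t => P.mul (eval s) (eval t)

end PMVTerm

namespace PMVAlg

variable {n : ℕ} {B : Type*} (P : PMVAlg B) (p : Fin n → B)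

def closure : P.Subalgebra where
  carrier := Set.range (PMVTerm.eval P p)
  zero_mem := ⟨.zero, rfl⟩
  oplus_mem := by rintro _ _ ⟨s, rfl⟩ ⟨t, rfl⟩; exact ⟨.oplus s t, rfl⟩
  star_mem := by rintro _ ⟨s, rfl⟩; exact ⟨.star s, rfl⟩
  mul_mem := by rintro _ _ ⟨s, rfl⟩ ⟨t, rfl⟩; exact ⟨.mul s t, rfl⟩

lemma mem_closure (i : Fin n) : p i ∈ (P.closure p).carrier := ⟨.var i, rfl⟩

instance : Countable (P.closure p).carrier := (Set.countable_range _).to_subtype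

end PMVAlg

namespace PMVAlg

variable {B C : Type*} (P : PMVAlg B) (e : C ≃ B)

def transport : PMVAlg C where
  oplus a b := e.symm (P.toMVAlg.oplus (e a) (e b))
  star a := e.symm (P.toMVAlg.star (e a))
  zero := e.symm P.toMVAlg.zero
  oplus_comm a b := by rw [P.toMVAlg.oplus_comm]
  oplus_assoc a b c := by simp only [Equiv.apply_symm_apply, P.toMVAlg.oplus_assoc]
  oplus_zero a := by simp only [Equiv.apply_symm_apply, P.toMVAlg.oplus_zero, e.symm_apply_apply]
  star_star a := by simp only [Equiv.apply_symm_apply, P.toMVAlg.star_star, e.symm_apply_apply]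
  oplus_one a := by simp only [Equiv.apply_symm_apply, P.toMVAlg.oplus_one]
  luk a b := by simp only [Equiv.apply_symm_apply, P.toMVAlg.luk]
  mul a b := e.symm (P.mul (e a) (e b))
  mul_assoc a b c := by simp only [Equiv.apply_symm_apply, P.mul_assoc]
  mul_comm a b := by rw [P.mul_comm]
  mul_one a := by
    simp only [MVAlg.one, Equiv.apply_symm_apply]
    exact (congrArg e.symm (P.mul_one (e a))).trans (e.symm_apply_apply a)
  mul_linear_right x y z h := by
    simp only [MVAlg.le, MVAlg.one, Equiv.apply_symm_apply, e.symm_apply_eq] at h ⊢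
    rw [P.mul_linear_right _ _ _ h]
  mul_linear_left x y z h := by
    simp only [MVAlg.le, MVAlg.one, Equiv.apply_symm_apply, e.symm_apply_eq] at h ⊢
    rw [P.mul_linear_left _ _ _ h]

lemma pmvHom_transport : PMVHom (P.transport e) P e := by
  refine ⟨⟨fun _ _ => ?_, fun _ => ?_, ?_⟩, fun _ _ => ?_⟩ <;> exact e.apply_symm_apply _

lemma pmvHom_transport_symm : PMVHom P (P.transport e) e.symm := by
  refine ⟨⟨fun _ _ => ?_, fun _ => ?_, rfl⟩, fun _ _ => ?_⟩ <;>
    simp only [transport, Equiv.apply_symm_apply]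

end PMVAlg

namespace IsTensorPMV

variable {A : Type*} {M : MVAlg A} {TC : Type*} {T : PMVAlg TC} {ε : A → TC}

/-- The universal property, stated for one universe, extends to every semisimple target that
injects into a small type, by transporting the target into that universe. -/
theorem existsUnique_lift_of_injective.{w'} (hT : IsTensorPMV.{_, _, w'} M T ε) {C : Type*}
    {Q : PMVAlg C} (hQ : Q.Semisimple) {Z : Type} {ι : C → Z} (hι : Function.Injective ι)
    {f : A → C} (hf : MVHom M Q.toMVAlg f) :
    ∃! g : TC → C, PMVHom T Q g ∧ g ∘ ε = f := by
  let e : ULift.{w'} (Set.range ι) ≃ C := Equiv.ulift.trans (Equiv.ofInjective ι hι).symm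
  have hQ' : (Q.transport e).Semisimple := (Q.pmvHom_transport e).1.semisimple e.injective hQ
  obtain ⟨g, ⟨hg, hgε⟩, huniq⟩ :=
    hT.2.2.2 _ (Q.transport e) hQ' (e.symm ∘ f) (hf.comp (Q.pmvHom_transport_symm e).1)
  refine ⟨e ∘ g, ⟨hg.comp (Q.pmvHom_transport e), ?_⟩, fun g' ⟨hg', hg'ε⟩ => ?_⟩
  · rw [Function.comp_assoc, hgε, ← Function.comp_assoc, e.self_comp_symm, Function.id_comp]
  · have hg'' : PMVHom T (Q.transport e) (e.symm ∘ g') :=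
      hg'.comp (Q.pmvHom_transport_symm e)
    rw [← huniq (e.symm ∘ g') ⟨hg'', by rw [Function.comp_assoc, hg'ε]⟩, ← Function.comp_assoc,
      e.self_comp_symm, Function.id_comp]

/-- Two homomorphisms into a semisimple `P` are told apart in a simple quotient of `P`, and
simple MV-algebras are small. -/
theorem hom_ext (hT : IsTensorPMV M T ε) {B : Type*} {P : PMVAlg B} (hP : P.Semisimple)
    {h₁ h₂ : TC → B} (hh₁ : PMVHom T P h₁) (hh₂ : PMVHom T P h₂)
    (h : h₁ ∘ ε = h₂ ∘ ε) : h₁ = h₂ := by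
  funext t
  by_contra hne
  obtain ⟨I, hI, hmk⟩ := hP.exists_mk_ne hne
  have hχ := PMVAlg.pmvHom_mk hI.1
  have hsimple := PMVAlg.isSimple_quot hI
  have hlift := hT.existsUnique_lift_of_injective hsimple.semisimple
    hsimple.injective_zeroWords (hT.2.1.comp (hh₁.comp hχ).1)
  refine hmk (congrFun (hlift.unique ⟨hh₁.comp hχ, rfl⟩ ⟨hh₂.comp hχ, ?_⟩) t)
  rw [Function.comp_assoc, ← h]
  rfl

end IsTensorPMV

theorem stmt18_general {FC : Type u} (F : MVAlg FC)
    (n : ℕ) (x : Fin n → FC)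
    (hfree : ∀ (MC : Type v) (M : MVAlg MC) (m : Fin n → MC),
      ∃! h : FC → MC, MVHom F M h ∧ ∀ i, h (x i) = m i)
    {TC : Type w} (T : PMVAlg TC) (ε : FC → TC) (hT : IsTensorPMV F T ε)
    {PC : Type v} (P : PMVAlg PC) (hP : P.Semisimple) (p : Fin n → PC) :
    ∃! h : TC → PC, PMVHom T P h ∧ ∀ i, h (ε (x i)) = p i := by
  set S := P.closure p
  have hS : S.toPMVAlg.Semisimple := S.pmvHom_val.1.semisimple Subtype.val_injective hP
  obtain ⟨f, hf, hfx⟩ :=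
    (hfree _ S.toPMVAlg.toMVAlg fun i => ⟨p i, P.mem_closure p i⟩).exists
  obtain ⟨ι, hι⟩ := Countable.exists_injective_nat S.carrier
  obtain ⟨g, ⟨hg, hgε⟩, -⟩ := hT.existsUnique_lift_of_injective hS hι hf
  have hh := hg.comp S.pmvHom_val
  have hhx : ∀ i, (Subtype.val ∘ g) (ε (x i)) = p i := fun i =>
    congrArg Subtype.val ((congrFun hgε (x i)).trans (hfx i))
  refine ⟨Subtype.val ∘ g, ⟨hh, hhx⟩, fun h ⟨hh', hhx'⟩ => hT.hom_ext hP hh' hh ?_⟩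
  exact (hfree _ P.toMVAlg p).unique ⟨hT.2.1.comp hh'.1, hhx'⟩ ⟨hT.2.1.comp hh.1, hhx⟩

/-- the tensor PMV-algebra of the free `n`-generated semisimple MV-algebra
is freely generated (by the images of the free generators) in the class of unital
commutative semisimple PMV-algebras. -/
theorem stmt18 {FC : Type u} (F : MVAlg FC) (hF : F.Semisimple)
    (n : ℕ) (hn : 1 ≤ n) (x : Fin n → FC)
    (hfree : ∀ (MC : Type v) (M : MVAlg MC) (m : Fin n → MC),
      ∃! h : FC → MC, MVHom F M h ∧ ∀ i, h (x i) = m i)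
    {TC : Type w} (T : PMVAlg TC) (ε : FC → TC) (hT : IsTensorPMV F T ε)
    {PC : Type v} (P : PMVAlg PC) (hP : P.Semisimple) (p : Fin n → PC) :
    ∃! h : TC → PC, PMVHom T P h ∧ ∀ i, h (ε (x i)) = p i :=
  stmt18_general F n x hfree T ε hT P hP p
end
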